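/- arXiv:2210.08463 — 4 statements merged into one kernel-verified Lean document; each statement's English description precedes it below -/
import Mathlib

section
/- Let q ≥ 3 be a prime power and m ≥ 4 an integer. Then θ = (q^m - Σ_{t=1}^{q-1} q^(⌈mt/(q-1)⌉-1) - 1)/(q-1) is the largest q-cyclotomic coset leader modulo n = (q^m - 1)/(q-1): θ is a coset leader, and no integer δ with θ < δ < n is a coset leader modulo n. -/
namespace S16
def dsum (q y : ℕ) : ℕ := (Nat.digits q y).sum
def dig (q y i : ℕ) : ℕ := y / q ^ i % q
def wsum (q y a L : ℕ) : ℕ := ∑ i ∈ Finset.range L, dig q y (a + i)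
def rot (q m j y : ℕ) : ℕ := y % q ^ (m - j) * q ^ j + y / q ^ (m - j)

variable {q : ℕ} (hq : 2 ≤ q)

lemma dsum_zero : dsum q 0 = 0 := by simp [dsum]

include hq
lemma dsum_def {y : ℕ} (hy : y ≠ 0) : dsum q y = y % q + dsum q (y / q) := by
  unfold dsum
  rw [Nat.digits_def' hq (Nat.pos_of_ne_zero hy)]
  simp

lemma dsum_lt {d : ℕ} (hd : d < q) : dsum q d = d := by
  rcases Nat.eq_zero_or_pos d with h | h
  · simp [h, dsum_zero]
  · rw [dsum_def hq h.ne', Nat.mod_eq_of_lt hd, Nat.div_eq_of_lt hd, dsum_zero]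
    omega

lemma dsum_split {k u v : ℕ} (hv : v < q ^ k) :
    dsum q (u * q ^ k + v) = dsum q u + dsum q v := by
  induction k generalizing v u with
  | zero =>
    have : v = 0 := by simpa using hv
    simp [this, dsum_zero]
  | succ k ih =>
    have hq0 : 0 < q := by omega
    rcases Nat.eq_zero_or_pos (u * q ^ (k+1) + v) with h | h
    · have h1 : u = 0 ∧ v = 0 := by
        constructor <;> nlinarith [pow_pos hq0 (k+1)]
      simp [h1.1, h1.2, dsum_zero]
    · rw [dsum_def hq h.ne']
      have e1 : (u * q ^ (k+1) + v) % q = v % q := by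
        rw [Nat.add_mod, pow_succ, ← mul_assoc, Nat.mul_mod_left]; simp
      have e2 : (u * q ^ (k+1) + v) / q = u * q ^ k + v / q := by
        rw [pow_succ, ← mul_assoc, mul_comm (u * q ^ k) q, Nat.mul_add_div hq0]
      have hvq : v / q < q ^ k := by
        rw [Nat.div_lt_iff_lt_mul hq0, ← pow_succ]; exact hv
      rw [e1, e2, ih hvq]
      rcases Nat.eq_zero_or_pos v with hv0 | hv0
      · simp [hv0, dsum_zero]
      · rw [dsum_def hq hv0.ne']; omega

lemma dsum_le {L y : ℕ} (hy : y < q ^ L) : dsum q y ≤ (q - 1) * L := by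
  induction L generalizing y with
  | zero =>
    have : y = 0 := by simpa using hy
    simp [this, dsum_zero]
  | succ L ih =>
    have hq0 : 0 < q := by omega
    rcases Nat.eq_zero_or_pos y with h | h
    · simp [h, dsum_zero]
    · rw [dsum_def hq h.ne']
      have h1 : y / q < q ^ L := by rw [Nat.div_lt_iff_lt_mul hq0, ← pow_succ]; exact hy
      have := ih h1
      have h2 : y % q ≤ q - 1 := by have := Nat.mod_lt y hq0; omega
      have : (q-1) * (L+1) = (q-1)*L + (q-1) := by ring
      omega

lemma dsum_full {L y : ℕ} (hy : y < q ^ L) (hds : (q - 1) * L ≤ dsum q y) :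
    y + 1 = q ^ L := by
  induction L generalizing y with
  | zero =>
    have : y = 0 := by simpa using hy
    simp [this]
  | succ L ih =>
    have hq0 : 0 < q := by omega
    rcases Nat.eq_zero_or_pos y with h | h
    · subst h
      rw [dsum_zero] at hds
      have : L + 1 ≤ (q-1) * (L+1) := Nat.le_mul_of_pos_left _ (by omega)
      omega
    · rw [dsum_def hq h.ne'] at hds
      have h1 : y / q < q ^ L := by rw [Nat.div_lt_iff_lt_mul hq0, ← pow_succ]; exact hy
      have h2 : dsum q (y / q) ≤ (q-1) * L := dsum_le hq h1
      have h3 : y % q ≤ q - 1 := by have := Nat.mod_lt y hq0; omega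
      have e : (q-1) * (L+1) = (q-1)*L + (q-1) := by ring
      have h4 : (q-1) * L ≤ dsum q (y / q) := by omega
      have h5 := ih h1 h4
      have h6 : y % q = q - 1 := by omega
      have h8 := Nat.div_add_mod y q
      have h7 : y % q + 1 = q := by omega
      calc y + 1 = q * (y / q) + (y % q + 1) := by omega
        _ = q * (y / q) + q := by rw [h7]
        _ = q * (y / q + 1) := by ring
        _ = q * q ^ L := by rw [h5]
        _ = q ^ (L+1) := by ring


-- div/mod splitting identities
lemma div_split {A z k i : ℕ} (hik : i ≤ k) :
    (A * q ^ k + z) / q ^ i = A * q ^ (k - i) + z / q ^ i := by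
  have hk : k - i + i = k := by omega
  have : A * q ^ k = A * q ^ (k - i) * q ^ i := by
    rw [mul_assoc, ← pow_add, hk]
  rw [this, Nat.add_comm, Nat.add_mul_div_right _ _ (pow_pos (by omega : 0 < q) i),
    Nat.add_comm]

lemma mod_div {y k a : ℕ} (hak : a ≤ k) :
    (y % q ^ k) / q ^ a = (y / q ^ a) % q ^ (k - a) := by
  have h1 : y = (y / q ^ k) * q ^ k + y % q ^ k := (Nat.div_add_mod y (q ^ k)).symm.trans (by ring_nf)
  have h2 : y / q ^ a = (y / q ^ k) * q ^ (k - a) + (y % q ^ k) / q ^ a := by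
    conv_lhs => rw [h1]
    exact div_split hq hak
  have h3 : (y % q ^ k) / q ^ a < q ^ (k - a) := by
    apply Nat.div_lt_of_lt_mul
    rw [← pow_add]
    have : a + (k - a) = k := by omega
    rw [this]
    exact Nat.mod_lt _ (pow_pos (by omega : 0 < q) k)
  rw [h2, Nat.add_comm, Nat.add_mul_mod_self_right, Nat.mod_eq_of_lt h3]

omit hq in
lemma dig_div {y a i : ℕ} : dig q (y / q ^ a) i = dig q y (a + i) := by
  unfold dig
  rw [Nat.div_div_eq_div_mul, ← pow_add]

lemma dig_mod {y k i : ℕ} (hik : i < k) : dig q (y % q ^ k) i = dig q y i := by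
  unfold dig
  rw [mod_div hq hik.le, Nat.mod_mod_of_dvd]
  exact dvd_pow_self q (by omega)

lemma dsum_eq_wsum0 {L y : ℕ} (hy : y < q ^ L) : dsum q y = wsum q y 0 L := by
  induction L generalizing y with
  | zero =>
    have : y = 0 := by simpa using hy
    simp [this, dsum_zero, wsum, dig]
  | succ L ih =>
    have hq0 : 0 < q := by omega
    rcases Nat.eq_zero_or_pos y with h | h
    · simp [h, dsum_zero, wsum, dig]
    · rw [dsum_def hq h.ne']
      have h1 : y / q < q ^ L := by rw [Nat.div_lt_iff_lt_mul hq0, ← pow_succ]; exact hy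
      rw [ih h1]
      unfold wsum
      rw [Finset.sum_range_succ' (fun i => dig q y (0 + i)) L]
      have e0 : dig q y (0 + 0) = y % q := by simp [dig]
      rw [e0]
      have e1 : ∀ i ∈ Finset.range L, dig q (y / q) (0 + i) = dig q y (0 + (i + 1)) := by
        intro i _
        have h := dig_div (q := q) (y := y) (a := 1) (i := i)
        simp only [pow_one] at h
        simp only [Nat.zero_add]
        rw [h]
        congr 1
        omega
      rw [Finset.sum_congr rfl e1]
      omega

lemma dsum_window {y a L : ℕ} : dsum q ((y / q ^ a) % q ^ L) = wsum q y a L := by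
  have h : (y / q ^ a) % q ^ L < q ^ L := Nat.mod_lt _ (pow_pos (by omega : 0 < q) L)
  rw [dsum_eq_wsum0 hq h]
  unfold wsum
  apply Finset.sum_congr rfl
  intro i hi
  simp only [Nat.zero_add]
  rw [dig_mod hq (Finset.mem_range.mp hi), dig_div]

lemma dsum_top {y c L : ℕ} (hy : y < q ^ (c + L)) : dsum q (y / q ^ c) = wsum q y c L := by
  rw [← dsum_window hq (y := y) (a := c) (L := L)]
  congr 1
  rw [Nat.mod_eq_of_lt]
  apply Nat.div_lt_of_lt_mul
  calc y < q ^ (c + L) := hy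
    _ = q ^ c * q ^ L := pow_add q c L

lemma dsum_modeq {y : ℕ} : y ≡ dsum q y [MOD q - 1] := by
  rcases Nat.lt_or_ge q 3 with h | h
  · have : q = 2 := by omega
    subst this
    exact Nat.modEq_one
  · refine Nat.modEq_digits_sum (q - 1) q ?_ y
    obtain ⟨r, rfl⟩ : ∃ r, q = r + 3 := ⟨q - 3, by omega⟩
    have h1 : r + 3 - 1 = r + 2 := by omega
    have h2 : r + 3 = (r + 2) + 1 := by omega
    rw [h1, h2, Nat.add_mod_left, Nat.mod_eq_of_lt (by omega)]

lemma rot_lt {m j y : ℕ} (hj : j ≤ m) (hy : y < q ^ m - 1) :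
    rot q m j y < q ^ m - 1 := by
  have hq0 : 0 < q := by omega
  have hA : 0 < q ^ j := pow_pos hq0 _
  have hB : 0 < q ^ (m - j) := pow_pos hq0 _
  have hm' : q ^ (m - j) * q ^ j = q ^ m := by rw [← pow_add]; congr 1; omega
  set b := y % q ^ (m - j) with hbdef
  set a := y / q ^ (m - j) with hadef
  have hb : b < q ^ (m - j) := Nat.mod_lt _ hB
  have ha : a < q ^ j := by
    apply Nat.div_lt_of_lt_mul
    have hm2 : q ^ j * q ^ (m - j) = q ^ m := by rw [← pow_add]; congr 1; omega
    omega
  have hab : a * q ^ (m - j) + b = y := by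
    rw [hadef, hbdef, mul_comm, Nat.div_add_mod]
  show b * q ^ j + a < q ^ m - 1
  rcases Nat.lt_or_ge (b + 2) (q ^ (m - j) + 1) with hcase | hcase
  · have h1 : (b + 2) * q ^ j ≤ q ^ (m - j) * q ^ j :=
      Nat.mul_le_mul_right _ (by omega)
    have h2 : (b + 2) * q ^ j = b * q ^ j + 2 * q ^ j := by ring
    rw [hm'] at h1
    omega
  · have hbeq : b + 1 = q ^ (m - j) := by omega
    have h3 : (a + 1) * q ^ (m - j) < q ^ j * q ^ (m - j) := by
      have e : (a + 1) * q ^ (m - j) = a * q ^ (m - j) + q ^ (m - j) := by ring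
      have hm'' : q ^ j * q ^ (m - j) = q ^ m := by rw [← pow_add]; congr 1; omega
      omega
    have h4 : a + 1 < q ^ j := Nat.lt_of_mul_lt_mul_right h3
    have h5 : (b + 1) * q ^ j = q ^ (m - j) * q ^ j := by rw [hbeq]
    have h6 : (b + 1) * q ^ j = b * q ^ j + q ^ j := by ring
    rw [hm'] at h5
    omega

lemma rot_mod {m j y : ℕ} (hj : j ≤ m) (hy : y < q ^ m - 1) :
    y * q ^ j % (q ^ m - 1) = rot q m j y := by
  have h1 := rot_lt hq hj hy
  have hq0 : 0 < q := by omega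
  have hqm : 1 ≤ q ^ m := Nat.one_le_pow _ _ hq0
  set b := y % q ^ (m - j) with hbdef
  set a := y / q ^ (m - j) with hadef
  have hab : a * q ^ (m - j) + b = y := by
    rw [hadef, hbdef, mul_comm, Nat.div_add_mod]
  have p1 : a * q ^ (m - j) * q ^ j = a * q ^ m := by
    rw [mul_assoc, ← pow_add]; congr 2; omega
  have p0 : y * q ^ j = a * q ^ (m - j) * q ^ j + b * q ^ j := by
    rw [← hab, Nat.add_mul]
  have e1 : a * q ^ m = a * (q ^ m - 1) + a := by
    rw [← Nat.mul_succ]; congr 1; omega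
  have key : y * q ^ j = a * (q ^ m - 1) + rot q m j y := by
    show y * q ^ j = a * (q ^ m - 1) + (b * q ^ j + a)
    omega
  rw [key, Nat.add_comm, Nat.add_mul_mod_self_right, Nat.mod_eq_of_lt h1]

lemma pow_reduce {m j y : ℕ} :
    y * q ^ j % (q ^ m - 1) = y * q ^ (j % m) % (q ^ m - 1) := by
  have hq0 : 0 < q := by omega
  have h1 : q ^ m ≡ 1 [MOD q ^ m - 1] := by
    have h2 : 1 ≤ q ^ m := Nat.one_le_pow _ _ hq0
    exact ((Nat.modEq_iff_dvd' (by omega : 1 ≤ q ^ m)).mpr dvd_rfl).symm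
  have h2 : q ^ j ≡ q ^ (j % m) [MOD q ^ m - 1] := by
    conv_lhs => rw [← Nat.div_add_mod j m]
    rw [pow_add, pow_mul]
    calc (q ^ m) ^ (j / m) * q ^ (j % m)
        ≡ 1 ^ (j / m) * q ^ (j % m) [MOD q ^ m - 1] :=
          Nat.ModEq.mul_right _ (h1.pow _)
      _ = q ^ (j % m) := by rw [one_pow, one_mul]
  exact (h2.mul_left y)

lemma lemB {L a b : ℕ} (ha : a < q ^ L) (hb : b < q ^ L) (hba : b < a) :
    ∃ K, 1 ≤ K ∧ K ≤ L ∧ dsum q (b / q ^ (L - K)) + 1 ≤ dsum q (a / q ^ (L - K)) := by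
  induction L generalizing a b with
  | zero =>
    have : a = 0 := by simpa using ha
    omega
  | succ L ih =>
    have hq0 : 0 < q := by omega
    have hL : 0 < q ^ L := pow_pos hq0 _
    have ha1 : a / q ^ L < q := by
      apply Nat.div_lt_of_lt_mul; rw [← pow_succ]; exact ha
    have hb1 : b / q ^ L < q := by
      apply Nat.div_lt_of_lt_mul; rw [← pow_succ]; exact hb
    have hge : b / q ^ L ≤ a / q ^ L := Nat.div_le_div_right hba.le
    rcases eq_or_lt_of_le hge with heq | hlt
    · have da := Nat.div_add_mod a (q ^ L)
      have db := Nat.div_add_mod b (q ^ L)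
      rw [← heq] at da
      have hmlt : b % q ^ L < a % q ^ L := by omega
      obtain ⟨K, hK1, hK2, hK⟩ := ih (Nat.mod_lt _ hL) (Nat.mod_lt _ hL) hmlt
      refine ⟨K + 1, by omega, by omega, ?_⟩
      have hLK : L + 1 - (K + 1) = L - K := by omega
      have decomp : ∀ y : ℕ, y < q ^ (L+1) →
          dsum q (y / q ^ (L - K)) = dsum q (y / q ^ L) + dsum q ((y % q ^ L) / q ^ (L - K)) := by
        intro y hy
        have e1 : y / q ^ (L - K) = (y / q ^ L) * q ^ K + (y % q ^ L) / q ^ (L - K) := by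
          have e2 := div_split hq (A := y / q ^ L) (z := y % q ^ L) (k := L) (i := L - K)
            (by omega)
          have e4 : L - (L - K) = K := by omega
          rw [e4] at e2
          conv_lhs => rw [← Nat.div_add_mod y (q ^ L), mul_comm (q ^ L) (y / q ^ L)]
          exact e2
        rw [e1]
        apply dsum_split hq
        apply Nat.div_lt_of_lt_mul
        rw [← pow_add]
        have e3 : L - K + K = L := by omega
        rw [e3]
        exact Nat.mod_lt _ hL
      rw [hLK, decomp a ha, decomp b hb, ← heq]
      omega
    · refine ⟨1, le_refl 1, by omega, ?_⟩
      have hL1 : L + 1 - 1 = L := by omega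
      rw [hL1, dsum_lt hq ha1, dsum_lt hq hb1]
      omega

lemma rot_div_pow {m j y : ℕ} (hj : j ≤ m) (hy : y < q ^ m) :
    rot q m j y / q ^ j = y % q ^ (m - j) := by
  show (y % q ^ (m - j) * q ^ j + y / q ^ (m - j)) / q ^ j = y % q ^ (m - j)
  have hq0 : 0 < q := by omega
  have ha : y / q ^ (m - j) < q ^ j := by
    apply Nat.div_lt_of_lt_mul
    have hm2 : q ^ (m - j) * q ^ j = q ^ m := by rw [← pow_add]; congr 1; omega
    omega
  rw [Nat.add_comm, Nat.add_mul_div_right _ _ (pow_pos hq0 j),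
    Nat.div_eq_of_lt ha, Nat.zero_add]

lemma rot_top1 {m j K y : ℕ} (hj : j ≤ m) (hK : K ≤ m - j) (hy : y < q ^ m) :
    dsum q (rot q m j y / q ^ (m - K)) = wsum q y (m - j - K) K := by
  have hq0 : 0 < q := by omega
  have e1 : rot q m j y / q ^ (m - K) = rot q m j y / q ^ j / q ^ (m - j - K) := by
    rw [Nat.div_div_eq_div_mul, ← pow_add]
    congr 2
    omega
  rw [e1, rot_div_pow hq hj hy]
  have e2 : y % q ^ (m - j) / q ^ (m - j - K) = (y / q ^ (m - j - K)) % q ^ K := by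
    have e3 : m - j - (m - j - K) = K := by omega
    rw [mod_div hq (by omega), e3]
  rw [e2, dsum_window hq]

lemma rot_top2 {m j K y : ℕ} (hj : j ≤ m) (hK1 : m - j < K) (hK2 : K ≤ m) (hy : y < q ^ m) :
    dsum q (rot q m j y / q ^ (m - K)) =
      wsum q y 0 (m - j) + wsum q y (2 * m - j - K) (j + K - m) := by
  have hq0 : 0 < q := by omega
  have hmKj : m - K ≤ j := by omega
  set b := y % q ^ (m - j) with hbdef
  set a := y / q ^ (m - j) with hadef
  have ha : a < q ^ j := by
    apply Nat.div_lt_of_lt_mul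
    have hm2 : q ^ (m - j) * q ^ j = q ^ m := by rw [← pow_add]; congr 1; omega
    omega
  have e1 : rot q m j y / q ^ (m - K) = b * q ^ (j - (m - K)) + a / q ^ (m - K) :=
    div_split hq hmKj
  have hada : a / q ^ (m - K) < q ^ (j - (m - K)) := by
    apply Nat.div_lt_of_lt_mul
    have : q ^ (m - K) * q ^ (j - (m - K)) = q ^ j := by rw [← pow_add]; congr 1; omega
    omega
  rw [e1, dsum_split hq hada]
  congr 1
  · -- dsum b = wsum y 0 (m - j)
    have hb' : b = (y / q ^ 0) % q ^ (m - j) := by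
      rw [pow_zero, Nat.div_one]
    rw [hb', dsum_window hq]
  · -- dsum (a / q^(m-K)) = wsum y (2m - j - K) (j + K - m)
    have e2 : a / q ^ (m - K) = y / q ^ (2 * m - j - K) := by
      rw [hadef, Nat.div_div_eq_div_mul, ← pow_add]
      congr 2
      omega
    rw [e2]
    apply dsum_top hq
    have : 2 * m - j - K + (j + K - m) = m := by omega
    rw [this]
    exact hy

omit hq in
lemma fsuper (a b mm : ℕ) : a / mm + b / mm ≤ (a + b) / mm := by
  rcases Nat.eq_zero_or_pos mm with h | h
  · simp [h]
  · rw [Nat.le_div_iff_mul_le h, Nat.add_mul]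
    have h1 := Nat.div_mul_le_self a mm
    have h2 := Nat.div_mul_le_self b mm
    omega

omit hq in
lemma fsub (a b mm : ℕ) (h : 0 < mm) : (a + b) / mm ≤ a / mm + (b + mm - 1) / mm := by
  rw [Nat.div_le_iff_le_mul_add_pred h, Nat.mul_add]
  have h1 := Nat.div_add_mod a mm
  have h2 := Nat.div_add_mod (b + mm - 1) mm
  have h3 : a % mm < mm := Nat.mod_lt _ h
  have h4 : (b + mm - 1) % mm < mm := Nat.mod_lt _ h
  omega

omit hq in
lemma geom {m : ℕ} : (q - 1) * (∑ i ∈ Finset.range m, q ^ i) + 1 = q ^ m ∨ q = 0 := by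
  rcases Nat.eq_zero_or_pos q with h | h
  · right; exact h
  · left
    induction m with
    | zero => simp
    | succ m ih =>
      rw [Finset.sum_range_succ, Nat.mul_add]
      have e1 : (q - 1) * q ^ m + q ^ m = q * q ^ m := by
        have : (q - 1) + 1 = q := by omega
        calc (q - 1) * q ^ m + q ^ m = ((q - 1) + 1) * q ^ m := by ring
          _ = q * q ^ m := by rw [this]
      have e2 : q ^ (m + 1) = q * q ^ m := by ring
      omega

def cc (q m i : ℕ) : ℕ := (i + 1) * (q - 1) / m - i * (q - 1) / m
def Et (q m t : ℕ) : ℕ := (m * t + q - 2) / (q - 1) - 1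
def Sx (q m : ℕ) : ℕ := ∑ t ∈ Finset.Icc 1 (q - 1), q ^ Et q m t
def Xx (q m : ℕ) : ℕ := q ^ m - 1 - Sx q m

omit hq in
lemma cc_mono (i : ℕ) {m : ℕ} : i * (q - 1) / m ≤ (i + 1) * (q - 1) / m :=
  Nat.div_le_div_right (Nat.mul_le_mul_right _ (by omega))

omit hq in
lemma cc_tel {m : ℕ} (a L : ℕ) :
    (∑ i ∈ Finset.range L, cc q m (a + i)) + a * (q - 1) / m = (a + L) * (q - 1) / m := by
  induction L with
  | zero => simp
  | succ L ih =>
    rw [Finset.sum_range_succ]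
    have h1 := cc_mono (q := q) (m := m) (a + L)
    have e1 : cc q m (a + L) = (a + L + 1) * (q - 1) / m - (a + L) * (q - 1) / m := rfl
    have e2 : a + (L + 1) = (a + L) + 1 := by omega
    rw [e2]
    omega

omit hq in
lemma cc_le {m i : ℕ} (hi : i < m) (hm : 0 < m) : cc q m i ≤ q - 1 := by
  have h1 : (i + 1) * (q - 1) / m ≤ m * (q - 1) / m :=
    Nat.div_le_div_right (Nat.mul_le_mul_right _ (by omega))
  rw [Nat.mul_div_cancel_left _ hm] at h1
  exact le_trans (Nat.sub_le _ _) h1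

lemma Et_lt {m t : ℕ} (hm : 0 < m) (ht : t ∈ Finset.Icc 1 (q - 1)) : Et q m t < m := by
  simp only [Finset.mem_Icc] at ht
  have hg : 0 < q - 1 := by omega
  have h1 : m * t + q - 2 ≤ m * (q - 1) + (q - 1) - 1 := by
    have := Nat.mul_le_mul_left m ht.2
    omega
  have h2 : (m * t + q - 2) / (q - 1) ≤ (m * (q - 1) + (q - 1) - 1) / (q - 1) :=
    Nat.div_le_div_right h1
  have h3 : m * (q - 1) + (q - 1) - 1 = m * (q - 1) + (q - 2) := by omega
  have h4 : (m * (q - 1) + (q - 2)) / (q - 1) = m + (q - 2) / (q - 1) := by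
    rw [Nat.mul_comm, Nat.mul_add_div hg]
  have h5 : (q - 2) / (q - 1) = 0 := Nat.div_eq_of_lt (by omega)
  rw [h3] at h2
  rw [h4, h5] at h2
  unfold Et
  omega

lemma Et_eq_iff {m t i : ℕ} (hm : 0 < m) (ht1 : 1 ≤ t) :
    Et q m t = i ↔ (i * (q - 1) / m + 1 ≤ t ∧ t ≤ (i + 1) * (q - 1) / m) := by
  have hg : 0 < q - 1 := by omega
  have hbig : (q - 1) ≤ m * t + q - 2 := by
    have h0 : 1 ≤ m * t := Nat.one_le_iff_ne_zero.mpr (by positivity)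
    omega
  have hpos : 1 ≤ (m * t + q - 2) / (q - 1) := by
    rw [Nat.le_div_iff_mul_le hg]; omega
  have e1 : Et q m t = i ↔ (m * t + q - 2) / (q - 1) = i + 1 := by
    unfold Et; omega
  have e2 : (m * t + q - 2) / (q - 1) = i + 1 ↔
      (i + 1) * (q - 1) ≤ m * t + q - 2 ∧ m * t + q - 2 < (i + 2) * (q - 1) := by
    constructor
    · intro h
      have hdm := Nat.div_add_mod (m * t + q - 2) (q - 1)
      have hmod : (m * t + q - 2) % (q - 1) < q - 1 := Nat.mod_lt _ hg
      rw [h] at hdm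
      have e3 : (q - 1) * (i + 1) = (i + 1) * (q - 1) := by ring
      have e4' : (i + 2) * (q - 1) = (i + 1) * (q - 1) + (q - 1) := by ring
      constructor
      · omega
      · omega
    · rintro ⟨h1, h2⟩
      have l1 : i + 1 ≤ (m * t + q - 2) / (q - 1) := (Nat.le_div_iff_mul_le hg).mpr h1
      have l2 : (m * t + q - 2) / (q - 1) < i + 2 := by
        rw [Nat.div_lt_iff_lt_mul hg]
        exact h2
      omega
  have e4 : ((i + 1) * (q - 1) ≤ m * t + q - 2 ∧ m * t + q - 2 < (i + 2) * (q - 1)) ↔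
      (i * (q - 1) + 1 ≤ m * t ∧ m * t ≤ (i + 1) * (q - 1)) := by
    have d1 : (i + 1) * (q - 1) = i * (q - 1) + (q - 1) := by ring
    have d2 : (i + 2) * (q - 1) = (i + 1) * (q - 1) + (q - 1) := by ring
    omega
  have e5 : (i * (q - 1) + 1 ≤ m * t) ↔ (i * (q - 1) / m + 1 ≤ t) := by
    constructor
    · intro h
      have : i * (q - 1) / m < t := by
        rw [Nat.div_lt_iff_lt_mul hm]
        calc i * (q - 1) < m * t := by omega
          _ = t * m := by ring
      omega
    · intro h
      have h2 : i * (q - 1) < t * m := by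
        rw [← Nat.div_lt_iff_lt_mul hm]; omega
      have : t * m = m * t := by ring
      omega
  have e6 : (m * t ≤ (i + 1) * (q - 1)) ↔ (t ≤ (i + 1) * (q - 1) / m) := by
    rw [Nat.le_div_iff_mul_le hm]
    constructor
    · intro h
      have e : t * m = m * t := by ring
      omega
    · intro h
      have e : t * m = m * t := by ring
      omega
  rw [e1, e2, e4, e5, e6]

lemma S_eq {m : ℕ} (hm : 0 < m) : Sx q m = ∑ i ∈ Finset.range m, cc q m i * q ^ i := by
  unfold Sx
  rw [← Finset.sum_fiberwise_of_maps_to (g := Et q m) (t := Finset.range m)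
    (fun t ht => Finset.mem_range.mpr (Et_lt hq hm ht))]
  apply Finset.sum_congr rfl
  intro i _
  have e1 : ∀ t ∈ (Finset.Icc 1 (q-1)).filter (fun t => Et q m t = i), q ^ Et q m t = q ^ i := by
    intro t ht
    rw [(Finset.mem_filter.mp ht).2]
  rw [Finset.sum_congr rfl e1, Finset.sum_const, smul_eq_mul]
  congr 1
  have e2 : (Finset.Icc 1 (q-1)).filter (fun t => Et q m t = i) =
      Finset.Icc (i * (q - 1) / m + 1) ((i + 1) * (q - 1) / m) := by
    ext t
    simp only [Finset.mem_filter, Finset.mem_Icc]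
    constructor
    · rintro ⟨⟨ht1, _⟩, hEt⟩
      exact (Et_eq_iff hq hm ht1).mp hEt
    · rintro ⟨h1, h2⟩
      have ht1 : 1 ≤ t := le_trans (Nat.le_add_left 1 _) h1
      have htg : t ≤ q - 1 := by
        have hb : (i + 1) * (q - 1) / m ≤ q - 1 := by
          have hh : (i + 1) * (q - 1) ≤ m * (q - 1) := Nat.mul_le_mul_right _ (by
            have := Finset.mem_range.mp ‹i ∈ Finset.range m›
            omega)
          calc (i + 1) * (q - 1) / m ≤ m * (q - 1) / m := Nat.div_le_div_right hh
            _ = q - 1 := Nat.mul_div_cancel_left _ hm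
        exact le_trans h2 hb
      exact ⟨⟨ht1, htg⟩, (Et_eq_iff hq hm ht1).mpr ⟨h1, h2⟩⟩
  rw [e2, Nat.card_Icc]
  have hmono := cc_mono (q := q) (m := m) i
  unfold cc
  omega

omit hq in
lemma rep_lt {L : ℕ} {d : ℕ → ℕ} (hq0 : 0 < q) (hd : ∀ i < L, d i ≤ q - 1) :
    ∑ i ∈ Finset.range L, d i * q ^ i < q ^ L := by
  induction L with
  | zero => simp [pow_pos hq0]
  | succ L ih =>
    rw [Finset.sum_range_succ]
    have h1 : ∑ i ∈ Finset.range L, d i * q ^ i < q ^ L := ih (fun i hi => hd i (by omega))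
    have h2 : d L * q ^ L ≤ (q - 1) * q ^ L := Nat.mul_le_mul_right _ (hd L (by omega))
    have h3 : (q - 1) * q ^ L + q ^ L = q * q ^ L := by
      have e : (q - 1) + 1 = q := by omega
      calc (q - 1) * q ^ L + q ^ L = ((q - 1) + 1) * q ^ L := by ring
        _ = q * q ^ L := by rw [e]
    have h4 : q ^ (L + 1) = q * q ^ L := by ring
    omega

lemma dig_rep {L k : ℕ} {d : ℕ → ℕ} (hd : ∀ i < L, d i ≤ q - 1) (hk : k < L) :
    dig q (∑ i ∈ Finset.range L, d i * q ^ i) k = d k := by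
  induction L generalizing k with
  | zero => omega
  | succ L ih =>
    have hq0 : 0 < q := by omega
    rw [Finset.sum_range_succ]
    set v := ∑ i ∈ Finset.range L, d i * q ^ i with hv
    have hvlt : v < q ^ L := rep_lt hq0 (fun i hi => hd i (by omega))
    rcases Nat.lt_or_ge k L with hkL | hkL
    · -- low digit unchanged
      unfold dig
      have e1 : (v + d L * q ^ L) / q ^ k = v / q ^ k + d L * q ^ (L - k) := by
        have e2 : d L * q ^ L = d L * q ^ (L - k) * q ^ k := by
          rw [mul_assoc, ← pow_add]
          congr 2
          omega
        rw [e2, Nat.add_mul_div_right _ _ (pow_pos hq0 k)]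
      rw [e1]
      have e3 : (v / q ^ k + d L * q ^ (L - k)) % q = v / q ^ k % q := by
        have hdvd : q ∣ d L * q ^ (L - k) := Dvd.dvd.mul_left (dvd_pow_self q (by omega)) _
        have e4 : d L * q ^ (L - k) % q = 0 := Nat.mod_eq_zero_of_dvd hdvd
        rw [Nat.add_mod, e4, Nat.add_zero, Nat.mod_mod_of_dvd _ dvd_rfl]
      have := ih (fun i hi => hd i (by omega)) hkL
      unfold dig at this
      rw [e3, this]
    · -- k = L
      have hkL' : k = L := by omega
      subst hkL'
      unfold dig
      have e1 : (v + d k * q ^ k) / q ^ k = d k + v / q ^ k := by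
        rw [Nat.add_mul_div_right _ _ (pow_pos hq0 k), Nat.add_comm]
      have e2 : v / q ^ k = 0 := Nat.div_eq_of_lt hvlt
      rw [e1, e2, Nat.add_zero, Nat.mod_eq_of_lt (by have := hd k (by omega); omega)]

lemma X_sum_eq {m : ℕ} (hm : 0 < m) :
    Xx q m = ∑ i ∈ Finset.range m, (q - 1 - cc q m i) * q ^ i ∧
      Sx q m + 1 ≤ q ^ m ∧ 1 ≤ Sx q m := by
  have hq0 : 0 < q := by omega
  have hgeom : (q - 1) * (∑ i ∈ Finset.range m, q ^ i) + 1 = q ^ m := by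
    rcases geom (q := q) (m := m) with h | h
    · exact h
    · omega
  have hsum : (∑ i ∈ Finset.range m, (q - 1 - cc q m i) * q ^ i) + Sx q m =
      q ^ m - 1 := by
    rw [S_eq hq hm, ← Finset.sum_add_distrib]
    have e1 : ∀ i ∈ Finset.range m,
        (q - 1 - cc q m i) * q ^ i + cc q m i * q ^ i = (q - 1) * q ^ i := by
      intro i hi
      have hle := cc_le (q := q) (Finset.mem_range.mp hi) hm
      rw [← Nat.add_mul]
      congr 1
      omega
    rw [Finset.sum_congr rfl e1, ← Finset.mul_sum]
    omega
  have hS1 : 1 ≤ Sx q m := by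
    unfold Sx
    have hne : (1 : ℕ) ∈ Finset.Icc 1 (q - 1) := by
      simp only [Finset.mem_Icc]; omega
    calc 1 ≤ q ^ Et q m 1 := Nat.one_le_pow _ _ hq0
      _ ≤ _ := Finset.single_le_sum (f := fun t => q ^ Et q m t)
        (fun t _ => Nat.zero_le _) hne
  refine ⟨?_, by omega, hS1⟩
  unfold Xx
  omega

lemma X_lt {m : ℕ} (hm : 0 < m) : Xx q m < q ^ m - 1 := by
  obtain ⟨_, h2, h3⟩ := X_sum_eq hq hm
  unfold Xx
  omega

lemma dig_X {m i : ℕ} (hm : 0 < m) (hi : i < m) :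
    dig q (Xx q m) i = q - 1 - cc q m i := by
  obtain ⟨h1, _, _⟩ := X_sum_eq hq hm
  rw [h1]
  exact dig_rep hq (fun j hj => Nat.sub_le _ _) hi

lemma wsum_X {m a L : ℕ} (hm : 0 < m) (haL : a + L ≤ m) :
    wsum q (Xx q m) a L + (a + L) * (q - 1) / m = (q - 1) * L + a * (q - 1) / m := by
  have e1 : wsum q (Xx q m) a L = ∑ i ∈ Finset.range L, (q - 1 - cc q m (a + i)) := by
    unfold wsum
    exact Finset.sum_congr rfl (fun i hi => dig_X hq hm (by
      have := Finset.mem_range.mp hi; omega))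
  have e2 : (∑ i ∈ Finset.range L, (q - 1 - cc q m (a + i))) +
      (∑ i ∈ Finset.range L, cc q m (a + i)) = (q - 1) * L := by
    rw [← Finset.sum_add_distrib]
    have e3 : ∀ i ∈ Finset.range L, (q - 1 - cc q m (a + i)) + cc q m (a + i) = q - 1 := by
      intro i hi
      have := cc_le (q := q) (show a + i < m by have := Finset.mem_range.mp hi; omega) hm
      omega
    rw [Finset.sum_congr rfl e3, Finset.sum_const, smul_eq_mul, Finset.card_range]
    ring
  have e4 := cc_tel (q := q) (m := m) a L
  omega

lemma dsum_topX {m K : ℕ} (hm : 0 < m) (hK : K ≤ m) :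
    dsum q (Xx q m / q ^ (m - K)) + (q - 1) = (q - 1) * K + (m - K) * (q - 1) / m := by
  have hXlt : Xx q m < q ^ ((m - K) + K) := by
    have : (m - K) + K = m := by omega
    rw [this]
    have := X_lt hq hm
    have h2 : 1 ≤ q ^ m := Nat.one_le_pow _ _ (by omega)
    omega
  rw [dsum_top hq hXlt]
  have := wsum_X hq hm (show (m - K) + K ≤ m by omega)
  have e : m - K + K = m := by omega
  rw [e] at this
  rw [Nat.mul_div_cancel_left _ hm] at this
  omega

lemma X_dvd {m : ℕ} (hm : 0 < m) : (q - 1) ∣ Xx q m := by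
  have hq0 : 0 < q := by omega
  have hXlt : Xx q m < q ^ m := by
    have := X_lt hq hm
    have h2 : 1 ≤ q ^ m := Nat.one_le_pow _ _ hq0
    omega
  have h1 : dsum q (Xx q m) = wsum q (Xx q m) 0 m := dsum_eq_wsum0 hq hXlt
  have h2 := wsum_X hq hm (show 0 + m ≤ m by omega)
  have e1 : (0 + m) * (q - 1) / m = q - 1 := by
    rw [Nat.zero_add, Nat.mul_comm, Nat.mul_div_cancel _ hm]
  have e2 : 0 * (q - 1) / m = 0 := by simp
  rw [e1, e2] at h2
  -- dsum X = (q-1)*m - (q-1) = (q-1)*(m-1)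
  have h3 : dsum q (Xx q m) = (q - 1) * (m - 1) := by
    have e3 : (q - 1) * m = (q - 1) * (m - 1) + (q - 1) := by
      rw [← Nat.mul_succ]
      congr 1
      omega
    omega
  have h4 : Xx q m ≡ (q - 1) * (m - 1) [MOD q - 1] := by
    rw [← h3]; exact dsum_modeq hq
  have h5 : (q - 1) * (m - 1) ≡ 0 [MOD q - 1] :=
    (Nat.modEq_zero_iff_dvd).mpr (Dvd.intro _ rfl)
  have := h4.trans h5
  exact (Nat.modEq_zero_iff_dvd).mp this

lemma part1_core {m j : ℕ} (hm : 0 < m) (hj : j < m) :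
    Xx q m ≤ rot q m j (Xx q m) := by
  by_contra hlt
  push_neg at hlt
  have hq0 : 0 < q := by omega
  have hqm1 : 1 ≤ q ^ m := Nat.one_le_pow _ _ hq0
  have hXm : Xx q m < q ^ m := by have := X_lt hq hm; omega
  have hrotm : rot q m j (Xx q m) < q ^ m := by
    have := rot_lt hq hj.le (X_lt hq hm); omega
  obtain ⟨K, hK1, hK2, hK⟩ := lemB hq hXm hrotm hlt
  have hXtop := dsum_topX hq hm hK2
  rcases le_or_gt K (m - j) with hcase | hcase
  · have h1 := rot_top1 hq hj.le hcase hXm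
    have h2 := wsum_X hq hm (show (m - j - K) + K ≤ m by omega)
    have e1 : m - j - K + K = m - j := by omega
    rw [e1] at h2
    have key : (m - K) * (q-1) / m + (m - j) * (q-1) / m ≤
        (m - j - K) * (q-1) / m + (q - 1) := by
      have f1 : (m - K) * (q - 1) / m ≤
          (m - j - K) * (q-1) / m + (j * (q-1) + m - 1) / m := by
        have e2 : (m - K) * (q - 1) = (m - j - K) * (q - 1) + j * (q - 1) := by
          rw [← Nat.add_mul]; congr 1; omega
        calc (m - K) * (q - 1) / m = ((m - j - K) * (q - 1) + j * (q - 1)) / m := by rw [e2]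
          _ ≤ _ := by
              have := fsub ((m - j - K) * (q - 1)) (j * (q - 1)) m hm
              omega
      have f2 : (j * (q-1) + m - 1) / m + (m - j) * (q-1) / m ≤ q - 1 := by
        have e4 : j * (q-1) + (m-j)*(q-1) = m * (q-1) := by
          rw [← Nat.add_mul]; congr 1; omega
        have e3 : (j * (q-1) + m - 1) + (m - j) * (q - 1) = m * (q-1) + (m - 1) := by
          omega
        calc (j * (q-1) + m - 1) / m + (m - j) * (q-1) / m
            ≤ ((j * (q-1) + m - 1) + (m - j) * (q-1)) / m := fsuper _ _ _
          _ = (m * (q-1) + (m - 1)) / m := by rw [e3]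
          _ = (q - 1) + (m-1)/m := by rw [Nat.mul_add_div hm]
          _ = q - 1 := by rw [Nat.div_eq_of_lt (by omega), Nat.add_zero]
      omega
    omega
  · have h1 := rot_top2 hq hj.le hcase hK2 hXm
    have h2 := wsum_X hq hm (show 0 + (m - j) ≤ m by omega)
    have h3 := wsum_X hq hm (show (2*m - j - K) + (j + K - m) ≤ m by omega)
    have e1 : 0 + (m - j) = m - j := by omega
    have e2 : (2*m - j - K) + (j + K - m) = m := by omega
    rw [e1] at h2
    rw [e2] at h3
    have e3 : 0 * (q-1) / m = 0 := by simp
    have e4 : m * (q-1) / m = q - 1 := Nat.mul_div_cancel_left _ hm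
    rw [e3] at h2
    rw [e4] at h3
    have key : (m - K) * (q-1)/m + (m - j)*(q-1)/m ≤ (2*m - j - K)*(q-1)/m := by
      have e5 : (m-K)*(q-1) + (m-j)*(q-1) = (2*m-j-K)*(q-1) := by
        rw [← Nat.add_mul]; congr 1; omega
      calc (m - K) * (q-1)/m + (m - j)*(q-1)/m
          ≤ ((m-K)*(q-1) + (m-j)*(q-1))/m := fsuper _ _ _
        _ = _ := by rw [e5]
    have e6 : (q-1)*(m-j) + (q-1)*(j+K-m) = (q-1)*K := by
      rw [← Nat.mul_add]; congr 1; omega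
    omega

lemma part1 {m : ℕ} (hm : 0 < m) (j : ℕ) :
    Xx q m ≤ Xx q m * q ^ j % (q ^ m - 1) := by
  rw [pow_reduce hq]
  rw [rot_mod hq (le_of_lt (Nat.mod_lt j hm)) (X_lt hq hm)]
  exact part1_core hq hm (Nat.mod_lt j hm)

def Tf (q m x : ℕ) : ℕ → ℕ := fun s => dig q x ((2 * m - 1 - s % m) % m)

omit hq in
lemma Tf_spec {m x s : ℕ} (hm : 0 < m) (hs : s < m) : Tf q m x s = dig q x (m - 1 - s) := by
  unfold Tf
  rw [Nat.mod_eq_of_lt hs]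
  congr 1
  have e1 : 2 * m - 1 - s = m + (m - 1 - s) := by omega
  rw [e1, Nat.add_mod_left, Nat.mod_eq_of_lt (by omega)]

omit hq in
lemma Tf_per {m x s : ℕ} : Tf q m x (s + m) = Tf q m x s := by
  unfold Tf
  rw [Nat.add_mod_right]

omit hq in
lemma Tf_shift {m x p r : ℕ} : Tf q m x (p + r) = Tf q m x (p % m + r) := by
  simp only [Tf]
  rw [Nat.mod_add_mod]

lemma rot_top_T {m x p K : ℕ} (hm : 0 < m) (hp : p < m) (hK1 : 1 ≤ K) (hK2 : K ≤ m)
    (hx : x < q ^ m) :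
    dsum q (rot q m p x / q ^ (m - K)) = ∑ r ∈ Finset.range K, Tf q m x (p + r) := by
  rcases le_or_gt K (m - p) with hcase | hcase
  · rw [rot_top1 hq hp.le hcase hx]
    unfold wsum
    rw [← Finset.sum_range_reflect (fun i => dig q x (m - p - K + i)) K]
    apply Finset.sum_congr rfl
    intro r hr
    have hrK := Finset.mem_range.mp hr
    rw [Tf_spec hm (show p + r < m by omega)]
    congr 1
    omega
  · rw [rot_top2 hq hp.le hcase hK2 hx]
    have e0 : (m - p) + (p + K - m) = K := by omega
    have esum := Finset.sum_range_add (fun r => Tf q m x (p + r)) (m - p) (p + K - m)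
    rw [e0] at esum
    rw [esum]
    congr 1
    · unfold wsum
      rw [← Finset.sum_range_reflect (fun i => dig q x (0 + i)) (m - p)]
      apply Finset.sum_congr rfl
      intro r hr
      have hrK := Finset.mem_range.mp hr
      rw [Tf_spec hm (show p + r < m by omega)]
      congr 1
      omega
    · unfold wsum
      rw [← Finset.sum_range_reflect (fun i => dig q x (2 * m - p - K + i)) (p + K - m)]
      apply Finset.sum_congr rfl
      intro r hr
      have hrK := Finset.mem_range.mp hr
      have e1 : p + (m - p + r) = r + m := by omega
      rw [e1, Tf_per, Tf_spec hm (show r < m by omega)]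
      congr 1
      omega

lemma Tsum_m {m x : ℕ} (hm : 0 < m) (hx : x < q ^ m) :
    ∑ r ∈ Finset.range m, Tf q m x r = dsum q x := by
  rw [dsum_eq_wsum0 hq hx]
  unfold wsum
  rw [← Finset.sum_range_reflect (fun i => dig q x (0 + i)) m]
  apply Finset.sum_congr rfl
  intro r hr
  have hrm := Finset.mem_range.mp hr
  rw [Tf_spec hm hrm]
  congr 1
  omega

lemma Tsum_per {m x : ℕ} (hm : 0 < m) (hx : x < q ^ m) (k : ℕ) :
    ∑ r ∈ Finset.range (k * m), Tf q m x r = k * dsum q x := by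
  induction k with
  | zero => simp
  | succ k ih =>
    have e0 : (k + 1) * m = k * m + m := by ring
    rw [e0, Finset.sum_range_add, ih]
    have e1 : ∀ r ∈ Finset.range m, Tf q m x (k * m + r) = Tf q m x r := by
      intro r _
      unfold Tf
      congr 2
      rw [Nat.add_comm, Nat.add_mul_mod_self_right]
    rw [Finset.sum_congr rfl e1, Tsum_m hq hm hx]
    ring

lemma Tsum_upper {m x : ℕ} (hm : 0 < m) (hx : x < q ^ m) (M : ℕ) :
    ∑ r ∈ Finset.range M, Tf q m x r ≤ (M / m + 1) * dsum q x := by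
  have h1 : M ≤ (M / m + 1) * m := by
    have h2 := Nat.div_add_mod M m
    have h3 : M % m < m := Nat.mod_lt _ hm
    have e : (M / m + 1) * m = m * (M / m) + m := by ring
    omega
  calc ∑ r ∈ Finset.range M, Tf q m x r
      ≤ ∑ r ∈ Finset.range ((M / m + 1) * m), Tf q m x r :=
        Finset.sum_le_sum_of_subset (Finset.range_subset_range.mpr h1)
    _ = (M / m + 1) * dsum q x := Tsum_per hq hm hx _

lemma hwin_all {m x : ℕ} (hm : 0 < m) (hXx : Xx q m < x) (hx2 : x < q ^ m - 1)
    (hlead : ∀ j, x ≤ x * q ^ j % (q ^ m - 1)) (p : ℕ) :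
    ∃ K, 1 ≤ K ∧ K ≤ m ∧
      (q - 1) * K + (m - K) * (q - 1) / m + 1 ≤
        (∑ r ∈ Finset.range K, Tf q m x (p + r)) + (q - 1) := by
  have hq0 : 0 < q := by omega
  have hqm1 : 1 ≤ q ^ m := Nat.one_le_pow _ _ hq0
  set p' := p % m with hp'
  have hp'm : p' < m := Nat.mod_lt _ hm
  have hrot_ge : Xx q m < rot q m p' x := by
    have h := hlead p'
    rw [rot_mod hq hp'm.le hx2] at h
    omega
  have hrotm : rot q m p' x < q ^ m := by have := rot_lt hq hp'm.le hx2; omega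
  have hXm : Xx q m < q ^ m := by have := X_lt hq hm; omega
  obtain ⟨K, hK1, hK2, hK⟩ := lemB hq hrotm hXm hrot_ge
  refine ⟨K, hK1, hK2, ?_⟩
  have h1 := rot_top_T hq hm hp'm hK1 hK2 (show x < q ^ m by omega)
  have h2 := dsum_topX hq hm hK2
  have h3 : ∀ r ∈ Finset.range K, Tf q m x (p + r) = Tf q m x (p' + r) := fun r _ => Tf_shift
  rw [Finset.sum_congr rfl h3]
  omega

lemma part2_core {m x : ℕ} (hm : 0 < m) (hXx : Xx q m < x) (hx2 : x < q ^ m - 1)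
    (hdvd : (q - 1) ∣ x) (hlead : ∀ j, x ≤ x * q ^ j % (q ^ m - 1)) : False := by
  have hq0 : 0 < q := by omega
  have hqm1 : 1 ≤ q ^ m := Nat.one_le_pow _ _ hq0
  have hxm : x < q ^ m := by omega
  set σ := dsum q x with hσdef
  have hσle : σ ≤ (q - 1) * m := dsum_le hq hxm
  have hσdvd : (q - 1) ∣ σ := by
    have h1 : x ≡ σ [MOD q - 1] := dsum_modeq hq
    have h2 : x ≡ 0 [MOD q - 1] := (Nat.modEq_zero_iff_dvd).mpr hdvd
    exact (Nat.modEq_zero_iff_dvd).mp (h1.symm.trans h2)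
  have hFne : σ ≠ (q - 1) * m := by
    intro h
    have := dsum_full hq hxm (by omega)
    omega
  have hF : σ + (q - 1) ≤ (q - 1) * m := by
    obtain ⟨c, hc⟩ := hσdvd
    obtain ⟨d, hd⟩ : (q - 1) ∣ (q - 1) * m := Dvd.intro _ rfl
    -- σ = (q-1)*c, gm = (q-1)*d, σ < gm so c < d so σ + (q-1) ≤ gm
    have hcd : c < d := by
      by_contra hge
      push_neg at hge
      have := Nat.mul_le_mul_left (q - 1) hge
      omega
    have := Nat.mul_le_mul_left (q - 1) (show c + 1 ≤ d by omega)
    have e : (q - 1) * (c + 1) = (q - 1) * c + (q - 1) := by ring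
    omega
  have hwin := hwin_all hq hm hXx hx2 hlead
  choose Kf hK1 hK2 hK3 using hwin
  let pf : ℕ → ℕ := fun N => Nat.rec 0 (fun _ acc => acc + Kf acc) N
  have pf_succ : ∀ N, pf (N + 1) = pf N + Kf (pf N) := fun N => rfl
  have step : ∀ P, m * ((q - 1) * Kf P) + 1 ≤
      m * (∑ r ∈ Finset.range (Kf P), Tf q m x (P + r)) + Kf P * (q - 1) := by
    intro P
    have h := hK3 P
    have hmul := Nat.mul_le_mul_left m h
    have e1 : m * ((q - 1) * Kf P + (m - Kf P) * (q - 1) / m + 1) =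
        m * ((q - 1) * Kf P) + m * ((m - Kf P) * (q - 1) / m) + m := by ring
    have e2 : m * ((∑ r ∈ Finset.range (Kf P), Tf q m x (P + r)) + (q - 1)) =
        m * (∑ r ∈ Finset.range (Kf P), Tf q m x (P + r)) + m * (q - 1) := by ring
    have hfb := Nat.div_add_mod ((m - Kf P) * (q - 1)) m
    have hfb2 : ((m - Kf P) * (q - 1)) % m < m := Nat.mod_lt _ hm
    have e3 : (m - Kf P) * (q - 1) + Kf P * (q - 1) = m * (q - 1) := by
      rw [← Nat.add_mul]
      have : m - Kf P + Kf P = m := by have := hK2 P; omega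
      rw [this]
    omega
  have main : ∀ N, m * ((q - 1) * pf N) + N ≤
      m * (∑ r ∈ Finset.range (pf N), Tf q m x r) + (q - 1) * pf N := by
    intro N
    induction N with
    | zero => simp [pf]
    | succ N ih =>
      rw [pf_succ]
      have hs := step (pf N)
      have esum := Finset.sum_range_add (fun r => Tf q m x r) (pf N) (Kf (pf N))
      have e1 : (q - 1) * (pf N + Kf (pf N)) = (q - 1) * pf N + (q - 1) * Kf (pf N) := by ring
      have e2 : m * ((q - 1) * (pf N + Kf (pf N))) =
          m * ((q - 1) * pf N) + m * ((q - 1) * Kf (pf N)) := by rw [e1]; ring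
      have e3 : m * (∑ r ∈ Finset.range (pf N + Kf (pf N)), Tf q m x r) =
          m * (∑ r ∈ Finset.range (pf N), Tf q m x r) +
          m * (∑ r ∈ Finset.range (Kf (pf N)), Tf q m x (pf N + r)) := by rw [esum]; ring
      have e4 : Kf (pf N) * (q - 1) = (q - 1) * Kf (pf N) := by ring
      omega
  set N := m * ((q - 1) * m) + 1 with hN
  set P := pf N with hP
  have h1 := main N
  rw [← hP] at h1
  have h2 := Tsum_upper hq hm hxm P
  have h3 : m * ((P / m + 1) * σ) ≤ (P + m) * σ := by
    have h4 : m * (P / m + 1) ≤ P + m := by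
      have h5 := Nat.div_add_mod P m
      have e : m * (P / m + 1) = m * (P / m) + m := by ring
      omega
    calc m * ((P / m + 1) * σ) = (m * (P / m + 1)) * σ := by ring
      _ ≤ (P + m) * σ := Nat.mul_le_mul_right σ h4
  have h4 : m * (∑ r ∈ Finset.range P, Tf q m x r) ≤ (P + m) * σ :=
    le_trans (Nat.mul_le_mul_left m h2) h3
  have h5 : (P + m) * σ + (P + m) * (q - 1) ≤ (P + m) * ((q - 1) * m) := by
    calc (P + m) * σ + (P + m) * (q - 1) = (P + m) * (σ + (q - 1)) := by ring
      _ ≤ (P + m) * ((q - 1) * m) := Nat.mul_le_mul_left _ hF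
  have e1 : (P + m) * ((q - 1) * m) = m * ((q - 1) * P) + m * ((q - 1) * m) := by ring
  have e2 : (P + m) * (q - 1) = P * (q - 1) + m * (q - 1) := by ring
  have e3 : (q - 1) * P = P * (q - 1) := by ring
  omega

end S16

theorem stmt_16 (q m : ℕ) (hq : IsPrimePow q) (hq3 : 3 ≤ q) (hm : 4 ≤ m) :
    (∀ j : ℕ,
        (q ^ m - (∑ t ∈ Finset.Icc 1 (q - 1), q ^ ((m * t + q - 2) / (q - 1) - 1)) - 1) / (q - 1) ≤
          ((q ^ m - (∑ t ∈ Finset.Icc 1 (q - 1), q ^ ((m * t + q - 2) / (q - 1) - 1)) - 1) / (q - 1) *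
              q ^ j) %
            ((q ^ m - 1) / (q - 1))) ∧
    (∀ δ : ℕ,
        (q ^ m - (∑ t ∈ Finset.Icc 1 (q - 1), q ^ ((m * t + q - 2) / (q - 1) - 1)) - 1) / (q - 1) <
            δ →
        δ < (q ^ m - 1) / (q - 1) →
        ∃ j : ℕ, (δ * q ^ j) % ((q ^ m - 1) / (q - 1)) < δ) := by
  have hq2 : 2 ≤ q := by omega
  have hm0 : 0 < m := by omega
  have hg : 0 < q - 1 := by omega
  have hgeom : (q - 1) * (∑ i ∈ Finset.range m, q ^ i) + 1 = q ^ m := by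
    rcases S16.geom (q := q) (m := m) with h | h
    · exact h
    · omega
  set nn := ∑ i ∈ Finset.range m, q ^ i with hnn
  have hgn : (q - 1) * nn = q ^ m - 1 := by omega
  have hdivn : (q ^ m - 1) / (q - 1) = nn := by
    rw [← hgn, Nat.mul_div_cancel_left _ hg]
  have hSdef : (∑ t ∈ Finset.Icc 1 (q - 1), q ^ ((m * t + q - 2) / (q - 1) - 1)) = S16.Sx q m :=
    rfl
  have hXeq : q ^ m - S16.Sx q m - 1 = S16.Xx q m := by
    unfold S16.Xx
    omega
  have hXdvd : (q - 1) ∣ S16.Xx q m := S16.X_dvd hq2 hm0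
  set A := (q ^ m - S16.Sx q m - 1) / (q - 1) with hA
  have hθ : (q - 1) * A = S16.Xx q m := by
    rw [hA, hXeq, Nat.mul_div_cancel' hXdvd]
  constructor
  · intro j
    rw [hSdef, hdivn]
    have key := S16.part1 hq2 hm0 j
    have hAe : (q ^ m - S16.Sx q m - 1) / (q - 1) = A := rfl
    rw [hAe]
    apply Nat.le_of_mul_le_mul_left _ hg
    have e1 : (q - 1) * (A * q ^ j % nn) = ((q - 1) * (A * q ^ j)) % ((q - 1) * nn) :=
      (Nat.mul_mod_mul_left _ _ _).symm
    have e2 : (q - 1) * (A * q ^ j) = S16.Xx q m * q ^ j := by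
      rw [← mul_assoc, hθ]
    rw [e1, e2, hgn, hθ]
    exact key
  · intro δ h1 h2
    rw [hSdef, hdivn] at *
    have hAe : (q ^ m - S16.Sx q m - 1) / (q - 1) = A := rfl
    rw [hAe] at h1
    by_contra hcon
    push_neg at hcon
    set x := (q - 1) * δ with hx
    have hXx : S16.Xx q m < x := by
      rw [← hθ]
      exact mul_lt_mul_of_pos_left h1 hg
    have hx2 : x < q ^ m - 1 := by
      rw [← hgn]
      exact mul_lt_mul_of_pos_left h2 hg
    have hdvd : (q - 1) ∣ x := Dvd.intro _ rfl
    have hlead : ∀ j, x ≤ x * q ^ j % (q ^ m - 1) := by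
      intro j
      have h := hcon j
      have e1 : (q - 1) * (δ * q ^ j % nn) = ((q - 1) * (δ * q ^ j)) % ((q - 1) * nn) :=
        (Nat.mul_mod_mul_left _ _ _).symm
      have e2 : (q - 1) * (δ * q ^ j) = x * q ^ j := by rw [hx, mul_assoc]
      have h3 := Nat.mul_le_mul_left (q - 1) h
      rw [e1, e2, hgn] at h3
      exact h3
    exact (S16.part2_core hq2 hm0 hXx hx2 hdvd hlead).elim
end

section
/- Let q ≥ 3 be a prime power, m ≥ 4, n = (q^m-1)/(q-1), and let δ₁ = (q^m - Σ_{t=1}^{q-1} q^(⌈mt/(q-1)⌉-1) - 1)/(q-1). Then the q-cyclotomic coset of δ₁ modulo n has size m/gcd(m, q-1). -/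
open Finset


private lemma uniq_digits (q : ℕ) (hq : 2 ≤ q) :
    ∀ (m : ℕ) (f g : ℕ → ℕ), (∀ j < m, f j < q) → (∀ j < m, g j < q) →
      (∑ j ∈ range m, f j * q ^ j) = (∑ j ∈ range m, g j * q ^ j) →
      ∀ j < m, f j = g j := by
  intro m
  induction m with
  | zero => intro f g _ _ _ j hj; omega
  | succ n ih =>
    intro f g hf hg hsum j hj
    rw [Finset.sum_range_succ', Finset.sum_range_succ'] at hsum
    have h1 : ∀ (f : ℕ → ℕ), (∑ i ∈ range n, f (i+1) * q ^ (i+1)) =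
        q * ∑ i ∈ range n, f (i+1) * q ^ i := by
      intro f
      rw [Finset.mul_sum]
      exact Finset.sum_congr rfl (fun i _ => by ring)
    rw [h1 f, h1 g] at hsum
    simp only [pow_zero, mul_one] at hsum
    have hf0 : f 0 < q := hf 0 (by omega)
    have hg0 : g 0 < q := hg 0 (by omega)
    have h0 : f 0 = g 0 := by
      have := congrArg (· % q) hsum
      simpa [Nat.mul_add_mod, Nat.mod_eq_of_lt hf0, Nat.mod_eq_of_lt hg0] using this
    have hrest : (∑ i ∈ range n, f (i+1) * q ^ i) = ∑ i ∈ range n, g (i+1) * q ^ i := by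
      have h2 : q * (∑ i ∈ range n, f (i+1) * q ^ i) = q * ∑ i ∈ range n, g (i+1) * q ^ i := by
        omega
      exact Nat.eq_of_mul_eq_mul_left (by omega) h2
    rcases Nat.eq_zero_or_pos j with rfl | hjpos
    · exact h0
    · obtain ⟨i, rfl⟩ : ∃ i, j = i + 1 := ⟨j - 1, by omega⟩
      exact ih (fun k => f (k+1)) (fun k => g (k+1)) (fun k hk => hf (k+1) (by omega))
        (fun k hk => hg (k+1) (by omega)) hrest i (by omega)

private lemma rot_inv1 (m ℓ a : ℕ) (hm : 0 < m) (ha : a < m) :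
    ((a + ℓ) % m + (m - ℓ % m)) % m = a := by
  rw [Nat.mod_add_mod]
  have h1 : a + ℓ + (m - ℓ % m) = a + m + m * (ℓ / m) := by
    have := Nat.mod_add_div ℓ m
    have : ℓ % m ≤ m := le_of_lt (Nat.mod_lt _ hm)
    omega
  rw [h1, Nat.add_mul_mod_self_left, Nat.add_mod_right, Nat.mod_eq_of_lt ha]

private lemma rot_inv2 (m ℓ a : ℕ) (hm : 0 < m) (ha : a < m) :
    ((a + (m - ℓ % m)) % m + ℓ) % m = a := by
  rw [Nat.mod_add_mod]
  have h1 : a + (m - ℓ % m) + ℓ = a + m + m * (ℓ / m) := by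
    have := Nat.mod_add_div ℓ m
    have : ℓ % m ≤ m := le_of_lt (Nat.mod_lt _ hm)
    omega
  rw [h1, Nat.add_mul_mod_self_left, Nat.add_mod_right, Nat.mod_eq_of_lt ha]

private lemma rot_sum (m ℓ q : ℕ) (hm : 0 < m) (F : ℕ → ℕ) :
    ∑ j ∈ range m, F j * q ^ ((j + ℓ) % m) =
      ∑ j ∈ range m, F ((j + (m - ℓ % m)) % m) * q ^ j := by
  refine Finset.sum_nbij' (fun j => (j + ℓ) % m) (fun j => (j + (m - ℓ % m)) % m)
    ?_ ?_ ?_ ?_ ?_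
  · intro a ha; exact mem_range.mpr (Nat.mod_lt _ hm)
  · intro a ha; exact mem_range.mpr (Nat.mod_lt _ hm)
  · intro a ha; exact rot_inv1 m ℓ a hm (mem_range.mp ha)
  · intro a ha; exact rot_inv2 m ℓ a hm (mem_range.mp ha)
  · intro a ha
    rw [rot_inv1 m ℓ a hm (mem_range.mp ha)]

private lemma fiber_eq (e m j t : ℕ) (he : 1 ≤ e) (hm : 1 ≤ m) (hj : j < m) :
    ((1 ≤ t ∧ t ≤ e + 1) ∧ (m * t + e) / (e + 1) - 1 = j) ↔
      ((e + 1) * j / m < t ∧ t ≤ (e + 1) * (j + 1) / m) := by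
  have key : ∀ s : ℕ, ((e + 1) * j / m < s ↔ (e + 1) * j < s * m) :=
    fun s => Nat.div_lt_iff_lt_mul (by omega)
  have key2 : ∀ s : ℕ, (s ≤ (e + 1) * (j + 1) / m ↔ s * m ≤ (e + 1) * (j + 1)) :=
    fun s => Nat.le_div_iff_mul_le (by omega)
  have r1 : (j + 1) * (e + 1) = (e + 1) * j + e + 1 := by ring
  have r2 : t * m = m * t := by ring
  have r3 : (j + 2) * (e + 1) = (e + 1) * (j + 1) + e + 1 := by ring
  have r4 : (j + 1) * (e + 1) = (e + 1) * (j + 1) := by ring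
  have r5 : m * (e + 1) = (e + 1) * m := by ring
  constructor
  · rintro ⟨⟨ht1, ht2⟩, hc⟩
    have h0 : 1 * (e + 1) ≤ m * t + e := by nlinarith
    have hge : 1 ≤ (m * t + e) / (e + 1) := (Nat.le_div_iff_mul_le (by omega)).mpr h0
    have hx : (m * t + e) / (e + 1) = j + 1 := by omega
    have h1 : (j + 1) * (e + 1) ≤ m * t + e :=
      (Nat.le_div_iff_mul_le (by omega)).mp (le_of_eq hx.symm)
    have h2 : m * t + e < (j + 2) * (e + 1) :=
      (Nat.div_lt_iff_lt_mul (by omega)).mp (by omega)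
    rw [key t, key2 t]
    omega
  · rintro ⟨h1, h2⟩
    rw [key t] at h1
    rw [key2 t] at h2
    have ht1 : 1 ≤ t := by
      rcases Nat.eq_zero_or_pos t with rfl | h
      · simp at h1
      · exact h
    have ht2 : t ≤ e + 1 := by
      have hjm : (e + 1) * (j + 1) ≤ (e + 1) * m := Nat.mul_le_mul_left _ (by omega)
      by_contra hcon
      push_neg at hcon
      have : m * (e + 2) ≤ m * t := Nat.mul_le_mul_left _ (by omega)
      have r6 : m * (e + 2) = (e + 1) * m + m := by ring
      omega
    have hl : j + 1 ≤ (m * t + e) / (e + 1) := by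
      rw [Nat.le_div_iff_mul_le (by omega)]
      omega
    have hu : (m * t + e) / (e + 1) < j + 2 := by
      rw [Nat.div_lt_iff_lt_mul (by omega)]
      omega
    exact ⟨⟨ht1, ht2⟩, by omega⟩

private lemma S_digits (q m : ℕ) (hq : 3 ≤ q) (hm : 1 ≤ m) :
    ∑ t ∈ Icc 1 (q - 1), q ^ ((m * t + q - 2) / (q - 1) - 1) =
      ∑ j ∈ range m, ((q - 1) * (j + 1) / m - (q - 1) * j / m) * q ^ j := by
  obtain ⟨e, rfl⟩ : ∃ e, q = e + 2 := ⟨q - 2, by omega⟩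
  have he : 1 ≤ e := by omega
  have hsimp1 : ∀ t : ℕ, m * t + (e + 2) - 2 = m * t + e := by intro t; omega
  have hsimp2 : e + 2 - 1 = e + 1 := by omega
  simp only [hsimp1, hsimp2]
  rw [← Finset.sum_fiberwise_of_maps_to
    (g := fun t => (m * t + e) / (e + 1) - 1) (t := range m) ?_]
  · refine Finset.sum_congr rfl fun j hj => ?_
    rw [mem_range] at hj
    have hfib : Finset.filter (fun t => (m * t + e) / (e + 1) - 1 = j) (Icc 1 (e + 1)) =
        Ioc ((e + 1) * j / m) ((e + 1) * (j + 1) / m) := by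
      ext t
      simp only [mem_filter, mem_Icc, mem_Ioc]
      exact fiber_eq e m j t he hm hj
    have hval : ∑ t ∈ Finset.filter (fun t => (m * t + e) / (e + 1) - 1 = j) (Icc 1 (e + 1)),
        (e + 2) ^ ((m * t + e) / (e + 1) - 1) =
        ∑ t ∈ Finset.filter (fun t => (m * t + e) / (e + 1) - 1 = j) (Icc 1 (e + 1)),
        (e + 2) ^ j :=
      Finset.sum_congr rfl fun t ht => by rw [(mem_filter.mp ht).2]
    rw [hval, Finset.sum_const, hfib, Nat.card_Ioc, smul_eq_mul]
  · intro t ht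
    rw [mem_Icc] at ht
    rw [mem_range]
    have h2 : m * t + e < (m + 1) * (e + 1) := by nlinarith
    have hlt : (m * t + e) / (e + 1) < m + 1 := (Nat.div_lt_iff_lt_mul (by omega)).mpr h2
    have hge : 1 ≤ (m * t + e) / (e + 1) :=
      (Nat.le_div_iff_mul_le (by omega)).mpr (by nlinarith)
    show (m * t + e) / (e + 1) - 1 < m
    omega

private lemma A_le (E m j : ℕ) (hm : 0 < m) : E * (j + 1) / m - E * j / m ≤ E := by
  have h1 : E * (j + 1) ≤ E * j + m * E := by nlinarith
  have h2 := Nat.div_le_div_right (c := m) h1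
  have h3 : (E * j + m * E) / m = E * j / m + E := Nat.add_mul_div_left (E * j) E hm
  omega

private lemma A_period (E m j : ℕ) (hm : 0 < m) :
    E * (j + m + 1) / m - E * (j + m) / m = E * (j + 1) / m - E * j / m := by
  have h1 : E * (j + m + 1) = E * (j + 1) + m * E := by ring
  have h2 : E * (j + m) = E * j + m * E := by ring
  have h3 : (E * (j + 1) + m * E) / m = E * (j + 1) / m + E := Nat.add_mul_div_left _ E hm
  have h4 : (E * j + m * E) / m = E * j / m + E := Nat.add_mul_div_left _ E hm
  rw [h1, h2, h3, h4]
  omega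

private lemma A_mod (E m j : ℕ) (hm : 0 < m) :
    E * (j % m + 1) / m - E * (j % m) / m = E * (j + 1) / m - E * j / m := by
  have key : ∀ k j : ℕ, E * (j + m * k + 1) / m - E * (j + m * k) / m
      = E * (j + 1) / m - E * j / m := by
    intro k
    induction k with
    | zero => simp
    | succ n ih =>
      intro j
      have h : j + m * (n + 1) = (j + m * n) + m := by ring
      rw [h, A_period E m (j + m * n) hm, ih j]
  have h := key (j / m) (j % m)
  rw [Nat.mod_add_div j m] at h
  exact h.symm

private lemma f_add (E m : ℕ) (hm : 0 < m) (a : ℕ) :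
    ∀ b, E * (a + b) / m = E * a / m + ∑ i ∈ range b, (E * (a + i + 1) / m - E * (a + i) / m) := by
  intro b
  induction b with
  | zero => simp
  | succ n ih =>
    rw [Finset.sum_range_succ]
    have hmono : E * (a + n) / m ≤ E * (a + n + 1) / m :=
      Nat.div_le_div_right (by nlinarith)
    have h : a + (n + 1) = a + n + 1 := by ring
    rw [h]
    omega

private lemma exists_j0 (E m : ℕ) (hE : 0 < E) (hm : 0 < m) :
    ∃ j₀ : ℕ, (E * j₀) % m = m - Nat.gcd E m := by
  set g := Nat.gcd E m with hg
  have hg1 : 1 ≤ g := Nat.gcd_pos_of_pos_left _ hE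
  have hgm : g ∣ m := Nat.gcd_dvd_right E m
  have hgle : g ≤ m := Nat.le_of_dvd hm hgm
  obtain ⟨c, hc⟩ : g ∣ m - g := Nat.dvd_sub hgm dvd_rfl
  have hbez : (g : ℤ) = E * Nat.gcdA E m + m * Nat.gcdB E m := Nat.gcd_eq_gcd_ab E m
  set u := Nat.gcdA E m with hu
  refine ⟨((u * c) % (m:ℤ)).toNat, ?_⟩
  have hmZ : (0:ℤ) < m := by exact_mod_cast hm
  have hnn : 0 ≤ (u * c) % (m:ℤ) := Int.emod_nonneg _ (by omega)
  have hcast : ((((u * c) % (m:ℤ)).toNat : ℤ)) = (u * c) % (m:ℤ) := Int.toNat_of_nonneg hnn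
  have h1 : ((u * c) % (m:ℤ)) ≡ u * c [ZMOD (m:ℤ)] := Int.emod_emod_of_dvd _ dvd_rfl
  have h2 : (E : ℤ) * u ≡ (g : ℤ) [ZMOD (m:ℤ)] := by
    apply (Int.modEq_iff_dvd.mpr _)
    exact ⟨Nat.gcdB E m, by linarith⟩
  have h3 : (E : ℤ) * (((u * c) % (m:ℤ)).toNat) ≡ (E : ℤ) * (u * c) [ZMOD (m:ℤ)] := by
    apply Int.ModEq.mul_left
    rw [hcast]
    exact h1
  have h4 : (E : ℤ) * (u * c) ≡ (g : ℤ) * c [ZMOD (m:ℤ)] := by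
    have := h2.mul_right (c : ℤ)
    calc (E : ℤ) * (u * c) = (E : ℤ) * u * c := by ring
      _ ≡ (g : ℤ) * c [ZMOD (m:ℤ)] := this
  have h5 : (g : ℤ) * c = ((m - g : ℕ) : ℤ) := by
    have : (m - g : ℕ) = g * c := hc
    rw [this]; push_cast; ring
  have hfin : (E : ℤ) * (((u * c) % (m:ℤ)).toNat) ≡ ((m - g : ℕ) : ℤ) [ZMOD (m:ℤ)] := by
    rw [← h5]; exact h3.trans h4
  have hlt : ((m - g : ℕ) : ℤ) < m := by
    have : m - g < m := by omega
    exact_mod_cast this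
  have : ((E * ((u * c) % (m:ℤ)).toNat) % m : ℕ) = ((m - g : ℕ) : ℤ).toNat := by
    have e1 : (((E * ((u * c) % (m:ℤ)).toNat) % m : ℕ) : ℤ)
        = ((E : ℤ) * (((u * c) % (m:ℤ)).toNat)) % m := by push_cast; ring_nf
    have e2 : ((E : ℤ) * (((u * c) % (m:ℤ)).toNat)) % m = ((m - g : ℕ) : ℤ) % m := hfin
    have e3 : ((m - g : ℕ) : ℤ) % m = ((m - g : ℕ) : ℤ) :=
      Int.emod_eq_of_lt (by positivity) hlt
    omega
  omega
section Crit
variable (q m : ℕ)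

private lemma qpow_one (hq3 : 3 ≤ q) (hm : 1 ≤ m) : ((q : ZMod (q^m - 1)))^m = 1 := by
  have h1 : 1 ≤ q ^ m := Nat.one_le_pow _ _ (by omega)
  have hqm1 : q ^ m = (q ^ m - 1) + 1 := by omega
  calc (q : ZMod (q^m - 1))^m = ((q^m : ℕ) : ZMod (q^m - 1)) := by push_cast; ring
    _ = (((q^m - 1) + 1 : ℕ) : ZMod (q^m - 1)) := by rw [← hqm1]
    _ = 1 := by push_cast; simp

private lemma qpow_mod (hq3 : 3 ≤ q) (hm : 1 ≤ m) (k : ℕ) :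
    ((q : ZMod (q^m - 1)))^k = (q : ZMod (q^m - 1))^(k % m) := by
  conv_lhs => rw [← Nat.mod_add_div k m]
  rw [pow_add, pow_mul, qpow_one q m hq3 hm, one_pow, mul_one]

private lemma sumA (hm : 1 ≤ m) (E : ℕ) :
    ∑ j ∈ range m, (E * (j + 1) / m - E * j / m) = E := by
  have h := f_add E m (by omega) 0 m
  simp only [Nat.zero_add, zero_add, Nat.mul_zero, mul_zero, Nat.zero_div, Nat.zero_mod] at h
  rw [← h]
  exact Nat.mul_div_cancel E (by omega)

private lemma bound_lt (hq3 : 3 ≤ q) (hm : 2 ≤ m) (p : ℕ → ℕ) (hp : ∀ j < m, p j < m) :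
    ∑ j ∈ range m, ((q - 1) * (j + 1) / m - (q - 1) * j / m) * q ^ (p j) < q ^ m - 1 := by
  have hstep : ∑ j ∈ range m, ((q - 1) * (j + 1) / m - (q - 1) * j / m) * q ^ (p j)
      ≤ ∑ j ∈ range m, ((q - 1) * (j + 1) / m - (q - 1) * j / m) * q ^ (m - 1) := by
    refine Finset.sum_le_sum fun j hj => ?_
    refine Nat.mul_le_mul_left _ (Nat.pow_le_pow_right (by omega) ?_)
    have := hp j (mem_range.mp hj)
    omega
  have hsum : ∑ j ∈ range m, ((q - 1) * (j + 1) / m - (q - 1) * j / m) * q ^ (m - 1)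
      = (q - 1) * q ^ (m - 1) := by
    rw [← Finset.sum_mul, sumA m (by omega)]
  have h1 : q ^ m = q ^ (m - 1) * q := by
    rw [← pow_succ]
    congr 1
    omega
  have h2 : q ≤ q ^ (m - 1) := Nat.le_self_pow (by omega) q
  have h3 : (q - 1) * q ^ (m - 1) + q ^ (m - 1) = q ^ (m - 1) * q := by
    have hq : q - 1 + 1 = q := by omega
    calc (q - 1) * q ^ (m - 1) + q ^ (m - 1) = (q - 1 + 1) * q ^ (m - 1) := by ring
      _ = q ^ (m - 1) * q := by rw [hq]; ring
  have h4 : 1 ≤ q ^ (m - 1) := Nat.one_le_pow _ _ (by omega)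
  omega

private lemma cast_T (hq3 : 3 ≤ q) (hm : 2 ≤ m) (ℓ : ℕ) :
    (((∑ t ∈ Finset.Icc 1 (q - 1), q ^ ((m * t + q - 2) / (q - 1) - 1)) * q ^ ℓ : ℕ) :
        ZMod (q ^ m - 1)) =
      ((∑ j ∈ range m, ((q - 1) * ((j + (m - ℓ % m)) % m + 1) / m -
          (q - 1) * ((j + (m - ℓ % m)) % m) / m) * q ^ j : ℕ) : ZMod (q ^ m - 1)) := by
  rw [← rot_sum m ℓ q (by omega) (fun i => (q - 1) * (i + 1) / m - (q - 1) * i / m)]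
  rw [S_digits q m hq3 (by omega)]
  push_cast
  rw [Finset.sum_mul]
  refine Finset.sum_congr rfl fun j hj => ?_
  rw [mul_assoc, ← pow_add, qpow_mod q m hq3 (by omega) (j + ℓ)]

private lemma crit (hq3 : 3 ≤ q) (hm : 2 ≤ m) (ℓ : ℕ) :
    ((∑ t ∈ Finset.Icc 1 (q - 1), q ^ ((m * t + q - 2) / (q - 1) - 1)) * q ^ ℓ ≡
        (∑ t ∈ Finset.Icc 1 (q - 1), q ^ ((m * t + q - 2) / (q - 1) - 1))
        [MOD q ^ m - 1]) ↔
      (∀ j < m, ((q - 1) * ((j + (m - ℓ % m)) % m + 1) / m -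
          (q - 1) * ((j + (m - ℓ % m)) % m) / m) =
        ((q - 1) * (j + 1) / m - (q - 1) * j / m)) := by
  have hTlt : ∑ j ∈ range m, ((q - 1) * ((j + (m - ℓ % m)) % m + 1) / m -
      (q - 1) * ((j + (m - ℓ % m)) % m) / m) * q ^ j < q ^ m - 1 := by
    rw [← rot_sum m ℓ q (by omega) (fun i => (q - 1) * (i + 1) / m - (q - 1) * i / m)]
    exact bound_lt q m hq3 (by omega) _ (fun j hj => Nat.mod_lt _ (by omega))
  have hSlt : (∑ t ∈ Finset.Icc 1 (q - 1), q ^ ((m * t + q - 2) / (q - 1) - 1)) < q ^ m - 1 := by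
    rw [S_digits q m hq3 (by omega)]
    exact bound_lt q m hq3 (by omega) _ (fun j hj => hj)
  constructor
  · intro hmod
    have hc : (((∑ t ∈ Finset.Icc 1 (q - 1), q ^ ((m * t + q - 2) / (q - 1) - 1)) * q ^ ℓ : ℕ) :
        ZMod (q ^ m - 1)) = ((∑ t ∈ Finset.Icc 1 (q - 1),
          q ^ ((m * t + q - 2) / (q - 1) - 1) : ℕ) : ZMod (q ^ m - 1)) :=
      (ZMod.natCast_eq_natCast_iff _ _ _).mpr hmod
    rw [cast_T q m hq3 (by omega) ℓ] at hc
    have hmod2 := (ZMod.natCast_eq_natCast_iff _ _ _).mp hc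
    have heq : ∑ j ∈ range m, ((q - 1) * ((j + (m - ℓ % m)) % m + 1) / m -
        (q - 1) * ((j + (m - ℓ % m)) % m) / m) * q ^ j =
        (∑ t ∈ Finset.Icc 1 (q - 1), q ^ ((m * t + q - 2) / (q - 1) - 1)) := by
      have h1 := hmod2
      unfold Nat.ModEq at h1
      rw [Nat.mod_eq_of_lt hTlt, Nat.mod_eq_of_lt hSlt] at h1
      exact h1
    rw [S_digits q m hq3 (by omega)] at heq
    exact uniq_digits q (by omega) m _ _
      (fun j hj => lt_of_le_of_lt (A_le (q-1) m _ (by omega)) (by omega))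
      (fun j hj => lt_of_le_of_lt (A_le (q-1) m _ (by omega)) (by omega)) heq
  · intro hdig
    have heq : ∑ j ∈ range m, ((q - 1) * ((j + (m - ℓ % m)) % m + 1) / m -
        (q - 1) * ((j + (m - ℓ % m)) % m) / m) * q ^ j =
        ∑ j ∈ range m, ((q - 1) * (j + 1) / m - (q - 1) * j / m) * q ^ j :=
      Finset.sum_congr rfl fun j hj => by rw [hdig j (mem_range.mp hj)]
    have hc := cast_T q m hq3 (by omega) ℓ
    rw [heq, ← S_digits q m hq3 (by omega)] at hc
    exact (ZMod.natCast_eq_natCast_iff _ _ _).mp hc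
end Crit

private lemma A_shift (E m i s : ℕ) (hm : 0 < m) (hdvd : m ∣ E * s) :
    E * (i + s + 1) / m - E * (i + s) / m = E * (i + 1) / m - E * i / m := by
  obtain ⟨c, hc⟩ := hdvd
  have h1 : E * (i + s + 1) = E * (i + 1) + m * c := by rw [← hc]; ring
  have h2 : E * (i + s) = E * i + m * c := by rw [← hc]; ring
  rw [h1, h2, Nat.add_mul_div_left _ _ hm, Nat.add_mul_div_left _ _ hm]
  omega

private lemma mdvd_Ed (E m : ℕ) (hm : 0 < m) (hE : 0 < E) :
    m ∣ E * (m / Nat.gcd m E) := by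
  have h1 : E * (m / Nat.gcd m E) = E * m / Nat.gcd m E :=
    (Nat.mul_div_assoc E (Nat.gcd_dvd_left m E)).symm
  have h2 : E * m / Nat.gcd m E = m * E / Nat.gcd m E := by rw [mul_comm]
  have h3 : m * E / Nat.gcd m E = m * (E / Nat.gcd m E) :=
    Nat.mul_div_assoc m (Nat.gcd_dvd_right m E)
  rw [h1, h2, h3]
  exact dvd_mul_right m _

private lemma pos_dig (q m : ℕ) (hq3 : 3 ≤ q) (hm : 2 ≤ m) :
    ∀ j < m, ((q - 1) * ((j + (m - (m / Nat.gcd m (q - 1)) % m)) % m + 1) / m -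
        (q - 1) * ((j + (m - (m / Nat.gcd m (q - 1)) % m)) % m) / m) =
      ((q - 1) * (j + 1) / m - (q - 1) * j / m) := by
  intro j hj
  set d := m / Nat.gcd m (q - 1) with hd
  set k := (j + (m - d % m)) % m with hk
  have hm0 : 0 < m := by omega
  have hdvd : m ∣ (q - 1) * d := by
    rw [hd, Nat.gcd_comm m (q - 1)]
    rw [Nat.gcd_comm (q-1) m]
    exact mdvd_Ed (q - 1) m hm0 (by omega)
  have hkd : (k + d) % m = j := by
    rw [hk, Nat.mod_add_mod]
    have h0 : d % m + m * (d / m) = d := Nat.mod_add_div d m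
    have h0' : d % m ≤ m := le_of_lt (Nat.mod_lt _ hm0)
    have h2 : j + (m - d % m) + d = j + m + m * (d / m) := by omega
    rw [h2]
    rw [Nat.add_mul_mod_self_left, Nat.add_mod_right, Nat.mod_eq_of_lt hj]
  calc (q - 1) * (k + 1) / m - (q - 1) * k / m
      = (q - 1) * (k + d + 1) / m - (q - 1) * (k + d) / m :=
        (A_shift (q - 1) m k d hm0 hdvd).symm
    _ = (q - 1) * ((k + d) % m + 1) / m - (q - 1) * ((k + d) % m) / m :=
        (A_mod (q - 1) m (k + d) hm0).symm
    _ = (q - 1) * (j + 1) / m - (q - 1) * j / m := by rw [hkd]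

private lemma final_contra (m g A B C : ℕ) (hm0 : 0 < m) (hg0 : 0 < g) (hglem : g ≤ m)
    (e1 : A = B + C) (hmain : A / m = B / m + C / m) (hj : C % m = m - g)
    (hr : g ≤ B % m) : False := by
  have d1 := Nat.div_add_mod B m
  have d2 := Nat.div_add_mod C m
  have d3 := Nat.div_add_mod A m
  have m3 : A % m < m := Nat.mod_lt _ hm0
  have h4 : m * (A / m) = m * (B / m) + m * (C / m) := by rw [hmain, Nat.mul_add]
  omega

private lemma neg_dig (q m ℓ : ℕ) (hq3 : 3 ≤ q) (hm : 2 ≤ m) (hl0 : 0 < ℓ)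
    (hld : ℓ < m / Nat.gcd m (q - 1)) :
    ¬ (∀ j < m, ((q - 1) * ((j + (m - ℓ % m)) % m + 1) / m -
        (q - 1) * ((j + (m - ℓ % m)) % m) / m) =
      ((q - 1) * (j + 1) / m - (q - 1) * j / m)) := by
  intro hdig
  obtain ⟨E, hE⟩ : ∃ E, E = q - 1 := ⟨_, rfl⟩
  rw [← hE] at hdig hld
  obtain ⟨g, hg⟩ : ∃ g, g = Nat.gcd m E := ⟨_, rfl⟩
  rw [← hg] at hld
  have hm0 : 0 < m := by omega
  have hE0 : 0 < E := by omega
  have hg0 : 0 < g := by rw [hg]; exact Nat.gcd_pos_of_pos_left _ hm0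
  have hgm : g ∣ m := hg ▸ Nat.gcd_dvd_left m E
  have hgE : g ∣ E := hg ▸ Nat.gcd_dvd_right m E
  have hglem : g ≤ m := Nat.le_of_dvd hm0 hgm
  have hdm : m / g ≤ m := Nat.div_le_self m g
  have hlm : ℓ < m := lt_of_lt_of_le hld hdm
  have hlmod : ℓ % m = ℓ := Nat.mod_eq_of_lt hlm
  rw [hlmod] at hdig
  have hsmall : ∀ i < m, (E * ((i + ℓ) % m + 1) / m - E * ((i + ℓ) % m) / m)
      = E * (i + 1) / m - E * i / m := by
    intro i hi
    have hj : (i + ℓ) % m < m := Nat.mod_lt _ hm0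
    have hkey := hdig ((i + ℓ) % m) hj
    have hback : ((i + ℓ) % m + (m - ℓ)) % m = i := by
      rw [Nat.mod_add_mod]
      have h2 : i + ℓ + (m - ℓ) = i + m := by omega
      rw [h2, Nat.add_mod_right, Nat.mod_eq_of_lt hi]
    rw [hback] at hkey
    exact hkey.symm
  have hshift : ∀ i : ℕ, E * (i + ℓ + 1) / m - E * (i + ℓ) / m
      = E * (i + 1) / m - E * i / m := by
    intro i
    have h3 : (i % m + ℓ) % m = (i + ℓ) % m := Nat.mod_add_mod i m ℓ
    calc E * (i + ℓ + 1) / m - E * (i + ℓ) / m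
        = E * ((i + ℓ) % m + 1) / m - E * ((i + ℓ) % m) / m :=
          (A_mod E m (i + ℓ) hm0).symm
      _ = E * ((i % m + ℓ) % m + 1) / m - E * ((i % m + ℓ) % m) / m := by rw [h3]
      _ = E * (i % m + 1) / m - E * (i % m) / m := hsmall (i % m) (Nat.mod_lt _ hm0)
      _ = E * (i + 1) / m - E * i / m := A_mod E m i hm0
  have htele : ∀ b : ℕ, E * (ℓ + b) / m = E * ℓ / m + E * b / m := by
    intro b
    have h1 := f_add E m hm0 ℓ b
    have h2 := f_add E m hm0 0 b
    simp only [Nat.zero_add, zero_add, Nat.mul_zero, mul_zero, Nat.zero_div] at h2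
    have h3 : ∑ i ∈ range b, (E * (ℓ + i + 1) / m - E * (ℓ + i) / m)
        = ∑ i ∈ range b, (E * (i + 1) / m - E * i / m) := by
      refine Finset.sum_congr rfl fun i hi => ?_
      have := hshift i
      have hc : ℓ + i = i + ℓ := by ring
      rw [hc]
      exact this
    rw [h3, ← h2] at h1
    exact h1
  -- r ≠ 0
  have hr0 : (E * ℓ) % m ≠ 0 := by
    intro hcon
    have hdvd : m ∣ E * ℓ := Nat.dvd_of_mod_eq_zero hcon
    obtain ⟨a, ha⟩ := hgE
    obtain ⟨b, hb⟩ := hgm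
    have hco : Nat.Coprime (m / g) (E / g) := by rw [hg] at hg0 ⊢; exact Nat.coprime_div_gcd_div_gcd hg0
    have hba : b = m / g := by rw [hb, Nat.mul_div_cancel_left _ hg0]
    have haa : a = E / g := by rw [ha, Nat.mul_div_cancel_left _ hg0]
    obtain ⟨k, hk⟩ := hdvd
    have hab : a * ℓ = b * k := by
      have : g * (a * ℓ) = g * (b * k) := by
        calc g * (a * ℓ) = (g * a) * ℓ := by ring
          _ = E * ℓ := by rw [← ha]
          _ = m * k := hk
          _ = (g * b) * k := by rw [← hb]
          _ = g * (b * k) := by ring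
      exact Nat.eq_of_mul_eq_mul_left hg0 this
    have hbal : b ∣ a * ℓ := ⟨k, hab⟩
    have hbl : b ∣ ℓ := by
      have hco' : Nat.Coprime b a := by rw [hba, haa]; exact hco
      exact (Nat.Coprime.dvd_of_dvd_mul_left hco' hbal)
    have : b ≤ ℓ := Nat.le_of_dvd hl0 hbl
    omega
  have hgr : g ∣ (E * ℓ) % m := by
    rw [Nat.dvd_mod_iff hgm]
    exact Dvd.dvd.mul_right hgE ℓ
  have hrg : g ≤ (E * ℓ) % m := Nat.le_of_dvd (Nat.pos_of_ne_zero hr0) hgr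
  obtain ⟨j₀, hj₀⟩ := exists_j0 E m hE0 hm0
  have hEgcomm : Nat.gcd E m = g := by rw [hg, Nat.gcd_comm]
  rw [hEgcomm] at hj₀
  have hmain := htele j₀
  have e1 : E * (ℓ + j₀) = E * ℓ + E * j₀ := by ring
  obtain ⟨A, hA⟩ : ∃ A, A = E * (ℓ + j₀) := ⟨_, rfl⟩
  obtain ⟨B, hB⟩ : ∃ B, B = E * ℓ := ⟨_, rfl⟩
  obtain ⟨C, hC⟩ : ∃ C, C = E * j₀ := ⟨_, rfl⟩
  rw [← hA, ← hB, ← hC] at e1 hmain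
  rw [← hB] at hrg
  rw [← hC] at hj₀
  exact final_contra m g A B C hm0 hg0 hglem e1 hmain hj₀ hrg

private lemma cancel_iff (E n a b : ℕ) (hE : 0 < E) :
    (a ≡ b [MOD n]) ↔ (a * E ≡ b * E [MOD n * E]) := by
  unfold Nat.ModEq
  rw [Nat.mul_mod_mul_right, Nat.mul_mod_mul_right]
  constructor
  · intro h; rw [h]
  · intro h; exact Nat.eq_of_mul_eq_mul_right hE h

private lemma sub_iff (N S x : ℕ) (hS : S ≤ N) :
    ((N - S) * x ≡ (N - S) [MOD N]) ↔ (S * x ≡ S [MOD N]) := by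
  rw [Nat.modEq_iff_dvd, Nat.modEq_iff_dvd]
  have hc : ((N - S : ℕ) : ℤ) = (N : ℤ) - S := by
    push_cast [hS]
    ring
  push_cast [hc]
  constructor
  · intro h
    have h3 : (S:ℤ) - S * x = N * (1 - x) - (((N:ℤ) - S) - ((N:ℤ) - S) * x) := by ring
    rw [h3]
    exact dvd_sub (dvd_mul_right _ _) h
  · intro h
    have h3 : ((N:ℤ) - S) - ((N:ℤ) - S) * x = N * (1 - x) - ((S:ℤ) - S * x) := by ring
    rw [h3]
    exact dvd_sub (dvd_mul_right _ _) h

private lemma S_dvd (q m : ℕ) (hq3 : 3 ≤ q) (hm : 2 ≤ m) :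
    (q - 1) ∣ (∑ t ∈ Finset.Icc 1 (q - 1), q ^ ((m * t + q - 2) / (q - 1) - 1)) := by
  haveI : NeZero (q - 1) := ⟨by omega⟩
  have hq1' : ((q : ZMod (q - 1))) = 1 := by
    have h : (q : ℕ) = (q - 1) + 1 := by omega
    rw [h]
    push_cast
    simp
  have hz : (((∑ t ∈ Finset.Icc 1 (q - 1), q ^ ((m * t + q - 2) / (q - 1) - 1)) : ℕ) :
      ZMod (q - 1)) = 0 := by
    push_cast
    rw [Finset.sum_congr rfl (fun t _ => by rw [hq1', one_pow])]
    simp only [Finset.sum_const, Nat.card_Icc, smul_eq_mul, mul_one]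
    have h2 : q - 1 + 1 - 1 = q - 1 := by omega
    rw [h2]
    simp
  exact (ZMod.natCast_eq_zero_iff _ _).mp hz

private lemma bridge (q m x : ℕ) (hq3 : 3 ≤ q) (hm : 2 ≤ m) :
    ((q ^ m - (∑ t ∈ Finset.Icc 1 (q - 1), q ^ ((m * t + q - 2) / (q - 1) - 1)) - 1) / (q - 1) *
        x ≡
      (q ^ m - (∑ t ∈ Finset.Icc 1 (q - 1), q ^ ((m * t + q - 2) / (q - 1) - 1)) - 1) / (q - 1)
        [MOD (q ^ m - 1) / (q - 1)]) ↔
    ((∑ t ∈ Finset.Icc 1 (q - 1), q ^ ((m * t + q - 2) / (q - 1) - 1)) * x ≡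
      (∑ t ∈ Finset.Icc 1 (q - 1), q ^ ((m * t + q - 2) / (q - 1) - 1)) [MOD q ^ m - 1]) := by
  have hq1 : 1 ≤ q ^ m := Nat.one_le_pow _ _ (by omega)
  have hSlt : (∑ t ∈ Finset.Icc 1 (q - 1), q ^ ((m * t + q - 2) / (q - 1) - 1)) < q ^ m - 1 := by
    rw [S_digits q m hq3 (by omega)]
    exact bound_lt q m hq3 hm _ (fun j hj => hj)
  have hEN : (q - 1) ∣ q ^ m - 1 := by
    have := Nat.sub_dvd_pow_sub_pow q 1 m
    simpa using this
  have hES := S_dvd q m hq3 hm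
  have hsub : q ^ m - (∑ t ∈ Finset.Icc 1 (q - 1), q ^ ((m * t + q - 2) / (q - 1) - 1)) - 1 =
      (q ^ m - 1) - (∑ t ∈ Finset.Icc 1 (q - 1), q ^ ((m * t + q - 2) / (q - 1) - 1)) := by
    omega
  rw [hsub]
  have key1 := cancel_iff (q - 1) ((q ^ m - 1) / (q - 1))
    (((q ^ m - 1) - (∑ t ∈ Finset.Icc 1 (q - 1), q ^ ((m * t + q - 2) / (q - 1) - 1))) / (q - 1) * x)
    (((q ^ m - 1) - (∑ t ∈ Finset.Icc 1 (q - 1), q ^ ((m * t + q - 2) / (q - 1) - 1))) / (q - 1))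
    (by omega)
  rw [Nat.div_mul_cancel hEN] at key1
  rw [key1]
  have hδ : ((q ^ m - 1) - (∑ t ∈ Finset.Icc 1 (q - 1), q ^ ((m * t + q - 2) / (q - 1) - 1))) /
      (q - 1) * (q - 1) =
      (q ^ m - 1) - (∑ t ∈ Finset.Icc 1 (q - 1), q ^ ((m * t + q - 2) / (q - 1) - 1)) :=
    Nat.div_mul_cancel (Nat.dvd_sub hEN hES)
  rw [mul_right_comm, hδ]
  exact sub_iff (q ^ m - 1) _ x hSlt.le

theorem stmt_17 (q m : ℕ) (hq : IsPrimePow q) (hq3 : 3 ≤ q) (hm : 4 ≤ m) :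
    ((q ^ m - (∑ t ∈ Finset.Icc 1 (q - 1), q ^ ((m * t + q - 2) / (q - 1) - 1)) - 1) / (q - 1) *
        q ^ (m / Nat.gcd m (q - 1))) ≡
      (q ^ m - (∑ t ∈ Finset.Icc 1 (q - 1), q ^ ((m * t + q - 2) / (q - 1) - 1)) - 1) / (q - 1)
        [MOD (q ^ m - 1) / (q - 1)] ∧
    ∀ ℓ : ℕ, 0 < ℓ → ℓ < m / Nat.gcd m (q - 1) →
      ¬ (((q ^ m - (∑ t ∈ Finset.Icc 1 (q - 1), q ^ ((m * t + q - 2) / (q - 1) - 1)) - 1) / (q - 1) *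
            q ^ ℓ) ≡
          (q ^ m - (∑ t ∈ Finset.Icc 1 (q - 1), q ^ ((m * t + q - 2) / (q - 1) - 1)) - 1) / (q - 1)
            [MOD (q ^ m - 1) / (q - 1)]) := by
  have hm2 : 2 ≤ m := by omega
  constructor
  · rw [bridge q m _ hq3 hm2]
    exact (crit q m hq3 hm2 (m / Nat.gcd m (q - 1))).mpr (pos_dig q m hq3 hm2)
  · intro ℓ h1 h2 hcon
    rw [bridge q m _ hq3 hm2] at hcon
    exact neg_dig q m ℓ hq3 hm2 h1 h2 ((crit q m hq3 hm2 ℓ).mp hcon)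
end

section
/- Let q be a prime power, m ≥ 4 even, n = (q^m-1)/(q+1), and t an even integer with 2 ≤ t ≤ m-2. For every integer u with 1 ≤ u ≤ (q^(m-t)-1)/(q+1) - 1, the q-cyclotomic coset leader of ((q+1)·q^t·u + q^t - 1)/(q+1) modulo n is at least (q^(t+1) + 2·q^t - 1)/(q+1). -/
lemma aux_even_dvd (q e : ℕ) (he : Even e) : (q+1) ∣ q^e - 1 := by
  obtain ⟨h, rfl⟩ := he
  rcases Nat.eq_zero_or_pos q with rfl | hq
  · simp
  obtain ⟨r, rfl⟩ : ∃ r, q = r + 1 := ⟨q - 1, by omega⟩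
  have d1 : (r+1)^2 - 1 ∣ ((r+1)^2)^h - 1 := by
    simpa using Nat.sub_dvd_pow_sub_pow ((r+1)^2) 1 h
  have d2 : (r+1+1) ∣ (r+1)^2 - 1 := by
    refine ⟨r, ?_⟩
    have h2 : (r+1)^2 = (r+1+1)*r + 1 := by ring
    omega
  have e1 : ((r+1)^2)^h = (r+1)^(h+h) := by rw [← pow_mul]; ring_nf
  rw [e1] at d1
  exact d2.trans d1

lemma aux_cop (q:ℕ) : Nat.Coprime (q+1) q := by simp [Nat.coprime_self_add_left]

lemma aux_divmod (d a b x : ℕ) (hb : b < d) (hx : x = d * a + b) :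
    x / d = a ∧ x % d = b := by
  subst hx
  refine ⟨?_, ?_⟩
  · rw [Nat.mul_add_div (by omega)]
    simp [Nat.div_eq_of_lt hb]
  · rw [Nat.mul_add_mod]
    exact Nat.mod_eq_of_lt hb

lemma aux_lt (q k l a b v N : ℕ) (hq : 1 ≤ q) (hb : b < q^k) (hv : v = q^k * a + b)
    (hvN : v + 2 ≤ N) (hN : N + 1 = q^k * q^l) : b * q^l + a < N := by
  have hql : 1 ≤ q^l := Nat.one_le_pow _ _ (by omega)
  have hqk : 1 ≤ q^k := Nat.one_le_pow _ _ (by omega)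
  rcases le_or_gt (a + 2) (q^l) with h | h
  · have h5 : (b+1) * q^l ≤ q^k * q^l := Nat.mul_le_mul_right _ (by omega)
    have h6 : (b+1) * q^l = b * q^l + q^l := by ring
    omega
  · have ha : a < q^l := by
      by_contra hc
      have : q^k * q^l ≤ q^k * a := Nat.mul_le_mul_left _ (by omega)
      omega
    have ha1 : a + 1 = q^l := by omega
    have hb3 : b + 3 ≤ q^k := by
      have h7 : q^k * a + q^k = q^k * (a+1) := by ring
      have h8 : q^k * (a+1) = q^k * q^l := by rw [ha1]
      omega
    have h9 : (b+3) * q^l ≤ q^k * q^l := Nat.mul_le_mul_right _ hb3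
    have h10 : (b+3) * q^l = b * q^l + 3 * q^l := by ring
    omega

lemma aux_ineq1 (q x : ℕ) (hq : 2 ≤ q) (hx : 1 ≤ x) : 2*x + q ≤ x*q + 2 := by
  obtain ⟨e, rfl⟩ : ∃ e, q = e+2 := ⟨q-2, by omega⟩
  obtain ⟨f, rfl⟩ : ∃ f, x = f+1 := ⟨x-1, by omega⟩
  nlinarith [Nat.zero_le (f*e)]

-- L + q^(m-1) ≤ q^m
lemma aux_F3 (q m t δ μ u : ℕ) (hq2 : 2 ≤ q) (ht2 : 2 ≤ t) (htm' : t + 2 ≤ m)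
    (eδ : q^t = (q+1)*δ + 1) (eμ : q^(m-t) = (q+1)*μ + 1)
    (hu1 : 1 ≤ u) (hu2 : u + 1 ≤ μ) :
    (q+1)*(q^t+δ) + q^(m-1) ≤ q^m := by
  have hL1 : (q+1)*(q^t+δ) + 1 = q^t*(q+2) := by rw [eδ]; ring
  have hA : q^t*q = q^(t+1) := (pow_succ q t).symm
  have hB : q^(m-1)*q = q^m := by rw [← pow_succ]; congr 1; omega
  have h2 : q^t*2 ≤ q^t*q := Nat.mul_le_mul_left _ (by omega)
  have E : q^t*(q+2) = q^t*q + q^t*2 := by ring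
  have hq3T : 3 ≤ q ∨ t + 3 ≤ m := by
    by_contra hcon
    push_neg at hcon
    obtain ⟨hcq, hcm⟩ := hcon
    have hq2' : q = 2 := by omega
    have hmt : m - t = 2 := by omega
    rw [hmt, hq2'] at eμ
    norm_num at eμ
    omega
  rcases hq3T with hq3 | htm3
  · have h1 : q^(t+1) ≤ q^(m-1) := Nat.pow_le_pow_right (by omega) (by omega)
    have h3 : q^(m-1)*3 ≤ q^(m-1)*q := Nat.mul_le_mul_left _ hq3
    omega
  · have h1 : q^(t+1) ≤ q^(m-2) := Nat.pow_le_pow_right (by omega) (by omega)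
    have h4 : q^(m-2)*q = q^(m-1) := by rw [← pow_succ]; congr 1; omega
    have h5 : q^(m-2)*2 ≤ q^(m-2)*q := Nat.mul_le_mul_left _ (by omega)
    have h6 : q^(m-1)*2 ≤ q^(m-1)*q := Nat.mul_le_mul_left _ (by omega)
    omega

lemma aux_core (q m t δ ν μ u : ℕ) (hq2 : 2 ≤ q) (ht2 : 2 ≤ t) (htm' : t + 2 ≤ m)
    (eδ : q^t = (q+1)*δ + 1) (eν : q^m = (q+1)*ν + 1) (eμ : q^(m-t) = (q+1)*μ + 1)
    (hu1 : 1 ≤ u) (hu2 : u + 1 ≤ μ) (k : ℕ) (hk1 : 1 ≤ k) (hk2 : k ≤ m) :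
    (q+1)*(q^t+δ) ≤ (((q+1)*(q^t*u+δ)) % q^k) * q^(m-k) + ((q+1)*(q^t*u+δ)) / q^k ∧
    (((q+1)*(q^t*u+δ)) % q^k) * q^(m-k) + ((q+1)*(q^t*u+δ)) / q^k < (q+1)*ν := by
  have hq0 : 0 < q := by omega
  have hqt1 : 1 ≤ q^t := Nat.one_le_pow _ _ hq0
  -- v + (q+1)*q^t ≤ N
  have hvN : (q+1)*(q^t*u+δ) + (q+1)*q^t ≤ (q+1)*ν := by
    have P3 : q^t * q^(m-t) = q^m := by rw [← pow_add]; congr 1; omega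
    have P2 : q^t * q^(m-t) = q^t*((q+1)*μ) + q^t := by rw [eμ]; ring
    have P4 : (q+1)*(q^t*(u+1)) ≤ (q+1)*(q^t*μ) :=
      Nat.mul_le_mul_left _ (Nat.mul_le_mul_left _ hu2)
    have P5 : (q+1)*(q^t*(u+1)) = (q+1)*(q^t*u) + (q+1)*q^t := by ring
    have P6 : (q+1)*(q^t*μ) = q^t*((q+1)*μ) := by ring
    have P7 : (q+1)*(q^t*u+δ) = (q+1)*(q^t*u) + (q+1)*δ := by ring
    omega
  have hqq : 3 ≤ (q+1)*q^t := le_trans (by omega) (Nat.mul_le_mul (by omega : 3 ≤ q+1) hqt1)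
  have hv2 : (q+1)*(q^t*u+δ) + 2 ≤ (q+1)*ν := by omega
  have hNform : (q+1)*ν + 1 = q^k * q^(m-k) := by
    rw [← pow_add, show k + (m-k) = m from by omega]
    omega
  have hL1 : (q+1)*(q^t+δ) + 1 = q^t*(q+2) := by rw [eδ]; ring
  have hq2pow : q + 2 ≤ q^2 := by
    have : q*2 ≤ q*q := Nat.mul_le_mul_left _ hq2
    have : q^2 = q*q := pow_two q
    omega
  rcases eq_or_lt_of_le hk2 with hkm | hkm
  · -- case k = m
    subst hkm
    have hb : (q+1)*(q^t*u+δ) < q^k := by omega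
    obtain ⟨hdiv, hmod⟩ := aux_divmod (q^k) 0 ((q+1)*(q^t*u+δ)) ((q+1)*(q^t*u+δ)) hb (by ring)
    rw [hdiv, hmod, Nat.sub_self, pow_zero, mul_one]
    constructor
    · have : q^t*1 ≤ q^t*u := Nat.mul_le_mul_left _ hu1
      have h9 : (q+1)*(q^t+δ) ≤ (q+1)*(q^t*u+δ) := Nat.mul_le_mul_left _ (by omega)
      omega
    · omega
  rcases le_or_gt k t with hkt | hkt
  · -- case 1 ≤ k ≤ t
    obtain ⟨r, hr⟩ : ∃ r, t = k + r := ⟨t-k, by omega⟩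
    have hXpos : 1 ≤ ((q+1)*u+1)*q^r :=
      Nat.one_le_iff_ne_zero.mpr (by positivity)
    obtain ⟨a, hae⟩ : ∃ a, a + 1 = ((q+1)*u+1)*q^r := ⟨((q+1)*u+1)*q^r - 1, by omega⟩
    obtain ⟨b, hbe⟩ : ∃ b, b + 1 = q^k := ⟨q^k - 1, by
      have := Nat.one_le_pow k q hq0; omega⟩
    have hpt : q^k * q^r = q^t := by rw [← pow_add]; congr 1; omega
    have hvab : (q+1)*(q^t*u+δ) = q^k * a + b := by
      have E1 : (q+1)*(q^t*u+δ) + 1 = (q+1)*q^t*u + ((q+1)*δ+1) := by ring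
      have E2 : q^k*(((q+1)*u+1)*q^r) = (q+1)*u*(q^k*q^r) + q^k*q^r := by ring
      rw [hpt] at E2
      have E3 : (q+1)*q^t*u = (q+1)*u*q^t := by ring
      have E4 : q^k*(a+1) = q^k*a + q^k := by ring
      rw [hae] at E4
      omega
    have hblt : b < q^k := by omega
    obtain ⟨hdiv, hmod⟩ := aux_divmod (q^k) a b _ hblt hvab
    rw [hdiv, hmod]
    refine ⟨?_, aux_lt q k (m-k) a b _ _ (by omega) hblt hvab hv2 hNform⟩
    have F1 : (b+1)*q^(m-k) = q^k * q^(m-k) := by rw [hbe]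
    have F1' : (b+1)*q^(m-k) = b*q^(m-k) + q^(m-k) := by ring
    have F3 : q^(m-k) ≤ q^(m-1) := Nat.pow_le_pow_right (by omega) (by omega)
    have F4 := aux_F3 q m t δ μ u hq2 ht2 htm' eδ eμ hu1 hu2
    omega
  -- case t < k < m
  obtain ⟨r, hr⟩ : ∃ r, k = t + r := ⟨k-t, by omega⟩
  have hr1 : 1 ≤ r := by omega
  have hqr : 0 < q^r := pow_pos hq0 r
  obtain ⟨a, w', hw, hw'⟩ : ∃ a w', q^r * a + w' = (q+1)*u ∧ w' < q^r :=
    ⟨_, _, Nat.div_add_mod _ _, Nat.mod_lt _ hqr⟩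
  have hprt : q^r * q^t = q^k := by rw [← pow_add]; congr 1; omega
  have hvab : (q+1)*(q^t*u+δ) = q^k * a + (w'*q^t + (q+1)*δ) := by
    have E1 : (q+1)*(q^t*u+δ) = ((q+1)*u)*q^t + (q+1)*δ := by ring
    rw [← hw] at E1
    have E2 : (q^r*a + w')*q^t = (q^r*q^t)*a + w'*q^t := by ring
    rw [hprt] at E2
    omega
  have hblt : w'*q^t + (q+1)*δ < q^k := by
    have F : (w'+1)*q^t ≤ q^r*q^t := Nat.mul_le_mul_right _ (by omega)
    have F2 : (w'+1)*q^t = w'*q^t + q^t := by ring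
    omega
  obtain ⟨hdiv, hmod⟩ := aux_divmod (q^k) a (w'*q^t + (q+1)*δ) _ hblt hvab
  rw [hdiv, hmod]
  refine ⟨?_, aux_lt q k (m-k) a _ _ _ (by omega) hblt hvab hv2 hNform⟩
  -- lower bound, t < k < m
  rcases le_or_gt (k+2) m with hk2m | hk2m
  · -- m - k ≥ 2
    have hQ2 : q^2 ≤ q^(m-k) := Nat.pow_le_pow_right (by omega) (by omega)
    rcases Nat.eq_zero_or_pos w' with hw0 | hw0
    · -- w' = 0 : (q+1) ∣ a, a ≥ q+1
      subst hw0
      have h6 : a*q^r = (q+1)*u := by rw [mul_comm]; omega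
      have hdvd : (q+1) ∣ a :=
        (Nat.Coprime.pow_right r (aux_cop q)).dvd_of_dvd_mul_right ⟨u, h6⟩
      have ha0 : a ≠ 0 := by
        rintro rfl
        simp at h6
        omega
      have haq : q+1 ≤ a := Nat.le_of_dvd (by omega) hdvd
      have hQ : q + 2 ≤ q^(m-k) := le_trans hq2pow hQ2
      have h8 : ((q+1)*δ)*(q+2) ≤ ((q+1)*δ)*q^(m-k) := Nat.mul_le_mul_left _ hQ
      have E1 : (0*q^t + (q+1)*δ)*q^(m-k) = ((q+1)*δ)*q^(m-k) := by ring
      have E3 : q^t*(q+2) = ((q+1)*δ)*(q+2) + (q+2) := by rw [eδ]; ring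
      omega
    · -- w' ≥ 1
      have hbl : q^t + (q+1)*δ ≤ w'*q^t + (q+1)*δ := by
        have : 1*q^t ≤ w'*q^t := Nat.mul_le_mul_right _ hw0
        omega
      have h10 : (q^t+(q+1)*δ)*q^(m-k) ≤ (w'*q^t+(q+1)*δ)*q^(m-k) :=
        Nat.mul_le_mul_right _ hbl
      have h12 : (q^t+(q+1)*δ)*(q^2) ≤ (q^t+(q+1)*δ)*q^(m-k) :=
        Nat.mul_le_mul_left _ hQ2
      have E : (q^t+(q+1)*δ)*(q^2) = q^t*q^2 + ((q+1)*δ)*q^2 := by ring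
      have E2 : q^t*q^2 = ((q+1)*δ)*q^2 + q^2 := by rw [eδ]; ring
      have h8 : q^t*(q+2) ≤ q^t*q^2 := Nat.mul_le_mul_left _ hq2pow
      have h9 : 1*q^2 ≤ q^t*q^2 := Nat.mul_le_mul_right _ hqt1
      omega
  · -- m - k = 1
    have hmk1 : m - k = 1 := by omega
    rw [hmk1, pow_one]
    -- a < q
    have hwlt : (q+1)*u < q^(m-t) := by
      have : (q+1)*(u+1) ≤ (q+1)*μ := Nat.mul_le_mul_left _ hu2
      have E : (q+1)*(u+1) = (q+1)*u + (q+1) := by ring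
      omega
    have hmt1 : q^(m-t) = q^r*q := by
      rw [← pow_succ]; congr 1; omega
    have halt : a < q := by
      have h1 : q^r*a ≤ (q+1)*u := by omega
      have h2 : q^r*a < q^r*q := by omega
      exact Nat.lt_of_mul_lt_mul_left h2
    rcases Nat.eq_zero_or_pos w' with hw0 | hw0
    · -- w' = 0 impossible
      exfalso
      subst hw0
      have h6 : a*q^r = (q+1)*u := by rw [mul_comm]; omega
      have hdvd : (q+1) ∣ a :=
        (Nat.Coprime.pow_right r (aux_cop q)).dvd_of_dvd_mul_right ⟨u, h6⟩
      have ha0 : a ≠ 0 := by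
        rintro rfl
        simp at h6
        omega
      have haq : q+1 ≤ a := Nat.le_of_dvd (by omega) hdvd
      omega
    rcases (by omega : w' = 1 ∨ 2 ≤ w') with hw1 | hw2
    · -- w' = 1
      have ha1 : 1 ≤ a := by
        rcases Nat.eq_zero_or_pos a with rfl | h
        · exfalso
          have : (q+1)*1 ≤ (q+1)*u := Nat.mul_le_mul_left _ hu1
          omega
        · exact h
      rw [hw1]
      have E : (1*q^t + (q+1)*δ)*q = q^t*q + ((q+1)*δ)*q := by ring
      have E2 : q^t*q = ((q+1)*δ)*q + q := by rw [eδ]; ring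
      have E4 : q^t*(q+2) = q^t*q + 2*q^t := by ring
      have h := aux_ineq1 q (q^t) hq2 hqt1
      omega
    · -- w' ≥ 2
      have hbl : 2*q^t ≤ w'*q^t := Nat.mul_le_mul_right _ hw2
      have h10 : (2*q^t+(q+1)*δ)*q ≤ (w'*q^t+(q+1)*δ)*q :=
        Nat.mul_le_mul_right _ (by omega)
      have E : (2*q^t + (q+1)*δ)*q = 2*(q^t*q) + ((q+1)*δ)*q := by ring
      have E2 : q^t*q = ((q+1)*δ)*q + q := by rw [eδ]; ring
      have E4 : q^t*(q+2) = q^t*q + 2*q^t := by ring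
      have h := aux_ineq1 q (q^t) hq2 hqt1
      have h1q : 0 < q^t*q := by positivity
      omega

theorem stmt_18 (q m t : ℕ) (hq : IsPrimePow q) (hm : 4 ≤ m) (hme : Even m)
    (ht : Even t) (ht2 : 2 ≤ t) (htm : t ≤ m - 2) :
    ∀ u : ℕ, 1 ≤ u → u ≤ (q ^ (m - t) - 1) / (q + 1) - 1 →
      ∀ j : ℕ,
        (q ^ (t + 1) + 2 * q ^ t - 1) / (q + 1) ≤
          (((q + 1) * q ^ t * u + q ^ t - 1) / (q + 1) * q ^ j) %
            ((q ^ m - 1) / (q + 1)) := by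
  intro u hu1 hu2 j
  have hq2 : 2 ≤ q := hq.two_le
  have htm' : t + 2 ≤ m := by omega
  obtain ⟨δ, eδ⟩ : ∃ δ, q^t = (q+1)*δ + 1 := by
    obtain ⟨δ, hδ⟩ := aux_even_dvd q t ht
    exact ⟨δ, by have := Nat.one_le_pow t q (by omega); omega⟩
  obtain ⟨ν, eν⟩ : ∃ ν, q^m = (q+1)*ν + 1 := by
    obtain ⟨ν, hν⟩ := aux_even_dvd q m hme
    exact ⟨ν, by have := Nat.one_le_pow m q (by omega); omega⟩
  obtain ⟨μ, eμ⟩ : ∃ μ, q^(m-t) = (q+1)*μ + 1 := by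
    obtain ⟨a, ha⟩ := hme; obtain ⟨b, hb⟩ := ht
    obtain ⟨μ, hμ⟩ := aux_even_dvd q (m-t) ⟨a - b, by omega⟩
    exact ⟨μ, by have := Nat.one_le_pow (m-t) q (by omega); omega⟩
  have h1 : (q^m - 1)/(q+1) = ν := by
    rw [show q^m - 1 = (q+1)*ν from by omega, Nat.mul_div_cancel_left _ (by omega)]
  have h2 : ((q+1)*q^t*u + q^t - 1)/(q+1) = q^t*u + δ := by
    have e : (q+1)*q^t*u + q^t = (q+1)*(q^t*u + δ) + 1 := by rw [eδ]; ring
    rw [show (q+1)*q^t*u + q^t - 1 = (q+1)*(q^t*u+δ) from by omega,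
      Nat.mul_div_cancel_left _ (by omega)]
  have h3 : (q^(t+1) + 2*q^t - 1)/(q+1) = q^t + δ := by
    have e : q^(t+1) + 2*q^t = (q+1)*(q^t + δ) + 1 := by rw [pow_succ, eδ]; ring
    rw [show q^(t+1) + 2*q^t - 1 = (q+1)*(q^t+δ) from by omega,
      Nat.mul_div_cancel_left _ (by omega)]
  have hu2' : u + 1 ≤ μ := by
    rw [show (q^(m-t) - 1)/(q+1) = μ from by
      rw [show q^(m-t) - 1 = (q+1)*μ from by omega, Nat.mul_div_cancel_left _ (by omega)]] at hu2
    omega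
  rw [h1, h2, h3]
  refine Nat.le_of_mul_le_mul_left ?_ (show 0 < q+1 by omega)
  have hscale : (q+1) * (((q^t*u + δ) * q^j) % ν) = (((q+1)*(q^t*u+δ)) * q^j) % ((q+1)*ν) := by
    rw [mul_assoc, Nat.mul_mod_mul_left]
  rw [hscale]
  have hm0 : 0 < m := by omega
  have hj' : j % m < m := Nat.mod_lt _ hm0
  have hNbig : 2 ≤ (q+1)*ν := by
    have h16 : 2^4 ≤ q^m := by
      calc (2:ℕ)^4 ≤ q^4 := Nat.pow_le_pow_left hq2 4
      _ ≤ q^m := Nat.pow_le_pow_right (by omega) hm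
    omega
  have hqmmod : q^m % ((q+1)*ν) = 1 := by
    rw [eν, Nat.add_mod_left]
    exact Nat.mod_eq_of_lt hNbig
  have hred : ((q+1)*(q^t*u+δ) * q^j) % ((q+1)*ν)
      = ((q+1)*(q^t*u+δ) * q^(j % m)) % ((q+1)*ν) := by
    conv_lhs => rw [← Nat.div_add_mod j m]
    rw [pow_add, pow_mul, ← mul_assoc]
    rw [Nat.mul_mod, Nat.mul_mod ((q+1)*(q^t*u+δ)) ((q^m)^(j/m)), Nat.pow_mod, hqmmod,
      one_pow, Nat.one_mod_eq_one.mpr (by omega), mul_one,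
      Nat.mod_mod_of_dvd _ dvd_rfl, ← Nat.mul_mod]
  rw [hred]
  obtain ⟨hc1, hc2⟩ := aux_core q m t δ ν μ u hq2 ht2 htm' eδ eν eμ hu1 hu2'
    (m - j % m) (by omega) (by omega)
  rw [show m - (m - j % m) = j % m from by omega] at hc1 hc2
  -- key identity
  have e2 : q^(m - j%m) * q^(j%m) = q^m := by rw [← pow_add]; congr 1; omega
  have e3 : q^(m-j%m) * (((q+1)*(q^t*u+δ)) / q^(m-j%m)) + ((q+1)*(q^t*u+δ)) % q^(m-j%m)
      = (q+1)*(q^t*u+δ) := Nat.div_add_mod _ _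
  have e1 : (q+1)*(q^t*u+δ) * q^(j%m)
      = ((((q+1)*(q^t*u+δ)) % q^(m-j%m)) * q^(j%m) + ((q+1)*(q^t*u+δ)) / q^(m-j%m))
        + (((q+1)*(q^t*u+δ)) / q^(m-j%m)) * ((q+1)*ν) := by
    calc (q+1)*(q^t*u+δ) * q^(j%m)
        = (q^(m-j%m) * (((q+1)*(q^t*u+δ)) / q^(m-j%m))
            + ((q+1)*(q^t*u+δ)) % q^(m-j%m)) * q^(j%m) := by rw [e3]
      _ = (((q+1)*(q^t*u+δ)) % q^(m-j%m)) * q^(j%m)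
            + (((q+1)*(q^t*u+δ)) / q^(m-j%m)) * (q^(m-j%m) * q^(j%m)) := by ring
      _ = (((q+1)*(q^t*u+δ)) % q^(m-j%m)) * q^(j%m)
            + (((q+1)*(q^t*u+δ)) / q^(m-j%m)) * q^m := by rw [e2]
      _ = _ := by rw [eν]; ring
  rw [e1, Nat.add_mul_mod_self_right, Nat.mod_eq_of_lt hc2]
  exact hc1
end

section
/- Let q ≥ 3 be a prime power, m ≥ 4, and write m = r(q-1) + s with r ≥ 0 and 0 ≤ s ≤ q-2. Let δ' be the q-cyclotomic coset leader modulo n = (q^m-1)/(q-1) of n - δ₁, where δ₁ = (q^m - Σ_{t=1}^{q-1} q^(⌈mt/(q-1)⌉-1) - 1)/(q-1). Then δ' > (q^(m-r-1) - 1)/(q-1). -/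
/-!
Multiplying by `q - 1` turns the cyclotomic coset of `n - δ₁` modulo `n` into the coset of
`B = ∑_{t=1}^{q-1} q ^ e t` modulo `q ^ m - 1`, where `e t = ⌈m t / (q - 1)⌉ - 1`. Since `B` has at
most `q - 1` nonzero digits, multiplication by `q ^ j` just rotates its `m` digits cyclically.
Consecutive positions `e t ≤ e (t + 1)` are at most `⌈m / (q - 1)⌉ ≤ r + 1` apart, and so is the
wrap-around pair `e (q - 1) = m - 1`, `e 1 + m` (as `e 1 ≤ r`). Hence every rotation has a nonzero
digit among the top `r + 1` positions, i.e. is at least `q ^ (m - 1 - r)`; dividing by `q - 1`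
gives the bound.
-/

open Finset

namespace Nat

theorem pow_modEq_pow_mod {q : ℕ} (hq : 0 < q) (a m : ℕ) :
    q ^ a ≡ q ^ (a % m) [MOD q ^ m - 1] := by
  have hqm : q ^ m ≡ 1 [MOD q ^ m - 1] := Nat.modEq_sub (Nat.one_le_pow _ _ hq)
  calc q ^ a = (q ^ m) ^ (a / m) * q ^ (a % m) := by
        rw [← pow_mul, ← pow_add, Nat.div_add_mod]
    _ ≡ 1 ^ (a / m) * q ^ (a % m) [MOD q ^ m - 1] := (hqm.pow _).mul_right _
    _ = q ^ (a % m) := by rw [one_pow, one_mul]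

theorem sum_pow_modEq_card {ι : Type*} (s : Finset ι) (e : ι → ℕ) {q : ℕ} (hq : 0 < q) :
    ∑ i ∈ s, q ^ e i ≡ #s [MOD q - 1] := by
  have hq1 : q ≡ 1 [MOD q - 1] := Nat.modEq_sub hq
  refine (Nat.ModEq.sum fun i _ => (hq1.pow (e i)).trans (by rw [one_pow])).trans ?_
  rw [sum_const, smul_eq_mul, mul_one]

theorem sub_one_mul_pow_pred_lt {q m : ℕ} (hq : 1 < q) (hm : 2 ≤ m) :
    (q - 1) * q ^ (m - 1) < q ^ m - 1 := by
  have hpow : q ^ m = q * q ^ (m - 1) := by rw [← pow_succ']; congr 1; omega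
  have hgt : 1 < q ^ (m - 1) := Nat.one_lt_pow (by omega) hq
  have hle : q ^ (m - 1) ≤ q * q ^ (m - 1) := Nat.le_mul_of_pos_left _ (by omega)
  rw [hpow, Nat.sub_one_mul]
  omega

theorem sum_pow_lt_pow_sub_one {ι : Type*} {s : Finset ι} {e : ι → ℕ} {q m : ℕ} (hq : 1 < q)
    (hm : 2 ≤ m) (hs : #s ≤ q - 1) (he : ∀ i ∈ s, e i < m) :
    ∑ i ∈ s, q ^ e i < q ^ m - 1 :=
  calc ∑ i ∈ s, q ^ e i ≤ #s • q ^ (m - 1) :=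
        sum_le_card_nsmul _ _ _ fun i hi => Nat.pow_le_pow_right (by omega) (by grind)
    _ ≤ (q - 1) * q ^ (m - 1) := Nat.mul_le_mul_right _ hs
    _ < q ^ m - 1 := sub_one_mul_pow_pred_lt hq hm

theorem sum_pow_mul_pow_mod {ι : Type*} {s : Finset ι} (e : ι → ℕ) {q m : ℕ} (hq : 1 < q)
    (hm : 2 ≤ m) (hs : #s ≤ q - 1) (j : ℕ) :
    (∑ i ∈ s, q ^ e i) * q ^ j % (q ^ m - 1) = ∑ i ∈ s, q ^ ((e i + j) % m) := by
  have hrot : (∑ i ∈ s, q ^ e i) * q ^ j ≡ ∑ i ∈ s, q ^ ((e i + j) % m) [MOD q ^ m - 1] := by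
    rw [sum_mul]
    exact Nat.ModEq.sum fun i _ => by rw [← pow_add]; exact pow_modEq_pow_mod (by omega) _ m
  rw [hrot, Nat.mod_eq_of_lt (sum_pow_lt_pow_sub_one hq hm hs fun i _ => Nat.mod_lt _ (by omega))]

theorem exists_mem_Icc_le_lt_add {f : ℕ → ℕ} {g : ℕ} (hstep : ∀ t, f (t + 1) ≤ f t + g)
    {a b c : ℕ} (hab : a ≤ b) (ha : f a ≤ c) (hb : c < f b + g) :
    ∃ t ∈ Icc a b, f t ≤ c ∧ c < f t + g := by
  induction b, hab using Nat.le_induction with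
  | base => exact ⟨a, by simp, ha, hb⟩
  | succ b hab ih =>
    by_cases hc : c < f b + g
    · obtain ⟨t, ht, hft⟩ := ih hc
      exact ⟨t, Icc_subset_Icc_right b.le_succ ht, hft⟩
    · exact ⟨b + 1, by simp; omega, by have := hstep b; omega, hb⟩

theorem div_sub_div_sub_of_dvd {a b d : ℕ} (hd : d ∣ b) (hb : b ≤ a) :
    a / d - (a - b) / d = b / d := by
  obtain ⟨k, rfl⟩ := hd
  rcases Nat.eq_zero_or_pos d with rfl | hd
  · simp
  have hk : k ≤ a / d := (Nat.le_div_iff_mul_le hd).2 (by linarith)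
  rw [Nat.sub_mul_div, Nat.mul_div_cancel_left _ hd]
  omega

theorem mul_div_mul_mod_div_of_dvd {d a N : ℕ} (ha : d ∣ a) (hN : d ∣ N) (b : ℕ) :
    d * (a / d * b % (N / d)) = a * b % N := by
  rw [← Nat.mul_mod_mul_left, ← mul_assoc, Nat.mul_div_cancel' ha, Nat.mul_div_cancel' hN]

end Nat

namespace CosetLeader

/-- The paper's `⌈m t / (q - 1)⌉ - 1`. -/
def exponent (q m t : ℕ) : ℕ := (m * t + q - 2) / (q - 1) - 1

section

variable {q m : ℕ}

theorem exponent_sub_one (hq : 2 ≤ q) : exponent q m (q - 1) = m - 1 := by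
  have h : m * (q - 1) + q - 2 = q - 2 + m * (q - 1) := by omega
  rw [exponent, h, Nat.add_mul_div_right _ _ (by omega), Nat.div_eq_of_lt (by omega), zero_add]

theorem exponent_le (hq : 2 ≤ q) {t : ℕ} (ht : t ≤ q - 1) : exponent q m t ≤ m - 1 := by
  rw [← exponent_sub_one hq]
  exact Nat.sub_le_sub_right (Nat.div_le_div_right (by gcongr)) 1

theorem div_succ_le_div_add {r : ℕ} (hq : 2 ≤ q) (hr : m ≤ (r + 1) * (q - 1)) (t : ℕ) :
    (m * (t + 1) + q - 2) / (q - 1) ≤ (m * t + q - 2) / (q - 1) + (r + 1) :=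
  calc (m * (t + 1) + q - 2) / (q - 1) ≤ (m * t + q - 2 + (r + 1) * (q - 1)) / (q - 1) :=
        Nat.div_le_div_right (by rw [mul_add_one]; omega)
    _ = (m * t + q - 2) / (q - 1) + (r + 1) := Nat.add_mul_div_right _ _ (by omega)

theorem exponent_succ_le {r : ℕ} (hq : 2 ≤ q) (hr : m ≤ (r + 1) * (q - 1)) (t : ℕ) :
    exponent q m (t + 1) ≤ exponent q m t + (r + 1) := by
  have := div_succ_le_div_add hq hr t
  unfold exponent
  omega

theorem exponent_one_le {r : ℕ} (hq : 2 ≤ q) (hr : m ≤ (r + 1) * (q - 1)) :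
    exponent q m 1 ≤ r := by
  have h := div_succ_le_div_add hq hr 0
  simp only [mul_zero, zero_add, mul_one] at h
  rw [Nat.div_eq_of_lt (by omega : q - 2 < q - 1)] at h
  simp only [exponent, mul_one]
  omega

theorem exists_exponent_add_mod_ge {r : ℕ} (hq : 2 ≤ q) (hm : 1 ≤ m)
    (hr : m ≤ (r + 1) * (q - 1)) (j : ℕ) :
    ∃ t ∈ Icc 1 (q - 1), m - 1 - r ≤ (exponent q m t + j) % m := by
  have hj : j % m < m := Nat.mod_lt j (by omega)
  have hmod (t : ℕ) : (exponent q m t + j) % m = (exponent q m t + j % m) % m :=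
    (Nat.ModEq.add_left _ (Nat.mod_modEq j m)).symm
  have hone := exponent_one_le hq hr
  have htop := exponent_sub_one (m := m) hq
  have hone_le := exponent_le (m := m) hq (t := 1) (by omega)
  by_cases hc : exponent q m 1 ≤ m - 1 - j % m
  · obtain ⟨t, ht, hle, hlt⟩ := Nat.exists_mem_Icc_le_lt_add (exponent_succ_le hq hr)
      (by omega : 1 ≤ q - 1) hc (by omega)
    refine ⟨t, ht, ?_⟩
    rw [hmod, Nat.mod_eq_of_lt (by omega)]
    omega
  · -- the rotation wraps `m - 1` around to `j % m - 1`
    refine ⟨q - 1, by simp; omega, ?_⟩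
    rw [hmod, htop, show m - 1 + j % m = j % m - 1 + m by omega, Nat.add_mod_right,
      Nat.mod_eq_of_lt (by omega)]
    omega

theorem pow_le_sum_pow_exponent_mul_pow_mod {r : ℕ} (hq : 2 ≤ q) (hm : 2 ≤ m)
    (hr : m ≤ (r + 1) * (q - 1)) (j : ℕ) :
    q ^ (m - 1 - r) ≤ (∑ t ∈ Icc 1 (q - 1), q ^ exponent q m t) * q ^ j % (q ^ m - 1) := by
  rw [Nat.sum_pow_mul_pow_mod _ (by omega) hm (by simp)]
  obtain ⟨t, ht, hge⟩ := exists_exponent_add_mod_ge hq (by omega) hr j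
  exact (Nat.pow_le_pow_right (by omega) hge).trans
    (single_le_sum (f := fun t => q ^ ((exponent q m t + j) % m)) (fun _ _ => by positivity) ht)

end

end CosetLeader

theorem stmt_19_general (q m r s : ℕ) (hq3 : 3 ≤ q) (hm : 4 ≤ m)
    (hdecomp : m = r * (q - 1) + s) (hs : s ≤ q - 2) :
    (q ^ (m - r - 1) - 1) / (q - 1) <
      sInf {x : ℕ | ∃ j : ℕ,
        x = (((q ^ m - 1) / (q - 1) -
              (q ^ m - (∑ t ∈ Finset.Icc 1 (q - 1), q ^ ((m * t + q - 2) / (q - 1) - 1)) - 1) /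
                (q - 1)) *
            q ^ j) % ((q ^ m - 1) / (q - 1))} := by
  change _ < sInf {x | ∃ j, x = (((q ^ m - 1) / (q - 1) -
    (q ^ m - ∑ t ∈ Icc 1 (q - 1), q ^ CosetLeader.exponent q m t - 1) / (q - 1)) * q ^ j) % _}
  set B := ∑ t ∈ Icc 1 (q - 1), q ^ CosetLeader.exponent q m t
  have hr : m ≤ (r + 1) * (q - 1) := by rw [add_one_mul]; omega
  have hB : (q - 1) ∣ B := by
    have h := Nat.sum_pow_modEq_card (Icc 1 (q - 1)) (CosetLeader.exponent q m) (by omega : 0 < q)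
    rw [Nat.card_Icc, Nat.add_sub_cancel] at h
    exact Nat.modEq_zero_iff_dvd.1 (h.trans (Nat.modEq_zero_iff_dvd.2 dvd_rfl))
  have hBlt : B < q ^ m - 1 := Nat.sum_pow_lt_pow_sub_one (by omega) (by omega) (by simp)
    fun t ht => by have := CosetLeader.exponent_le (m := m) (by omega) (mem_Icc.1 ht).2; omega
  rw [Nat.sub_right_comm (q ^ m), Nat.div_sub_div_sub_of_dvd hB hBlt.le]
  obtain ⟨j, hj⟩ := Nat.sInf_mem (⟨_, 0, rfl⟩ : {x | ∃ j : ℕ,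
    x = B / (q - 1) * q ^ j % ((q ^ m - 1) / (q - 1))}.Nonempty)
  rw [hj, Nat.div_lt_iff_lt_mul (by omega), mul_comm,
    Nat.mul_div_mul_mod_div_of_dvd hB (Nat.sub_one_dvd_pow_sub_one q m)]
  have hkey : q ^ (m - 1 - r) ≤ B * q ^ j % (q ^ m - 1) :=
    CosetLeader.pow_le_sum_pow_exponent_mul_pow_mod (by omega) (by omega) hr j
  have hpos : 0 < q ^ (m - 1 - r) := by positivity
  rw [show m - r - 1 = m - 1 - r by omega]
  omega

theorem stmt_19 (q m r s : ℕ) (hq : IsPrimePow q) (hq3 : 3 ≤ q) (hm : 4 ≤ m)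
    (hdecomp : m = r * (q - 1) + s) (hs : s ≤ q - 2) :
    (q ^ (m - r - 1) - 1) / (q - 1) <
      sInf {x : ℕ | ∃ j : ℕ,
        x = (((q ^ m - 1) / (q - 1) -
              (q ^ m - (∑ t ∈ Finset.Icc 1 (q - 1), q ^ ((m * t + q - 2) / (q - 1) - 1)) - 1) /
                (q - 1)) *
            q ^ j) % ((q ^ m - 1) / (q - 1))} :=
  stmt_19_general q m r s hq3 hm hdecomp hs
end
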